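/- arXiv:2601.18029 — 9 statements merged into one kernel-verified Lean document; each statement's English description precedes it below -/
import Mathlib

section
/- Suppose there exists a real number α such that Q'(r)·(U(r) − α) ≤ 0 for every r ∈ [r_i, r_o] (i.e. the Kelvin–Arnol'd I / Batchelor–Gill condition W_{α,N} = rQ'/(U−α) ≤ 0 holds). Then G(r) = 0 for all r ∈ [r_i, r_o]; that is, the Rayleigh-type equation admits no nontrivial solution with Im c ≠ 0, so the flow is stable to such disturbances. -/
/-
Put `H = r G` and `p = r / (N² + r²)`, so that the equation reads `(p H')' = (k²/r - Q'/(U - c)) H`.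
The flux `F = p H' · conj H` vanishes at both ends and `F' = (k²/r - Q'/(U - c)) |H|² + p |H'|²`.
For `μ = 1 + i (α - Re c) / Im c` one has `Re (μ / (U - c)) = (U - α) / |U - c|²`, which combines
the real and imaginary parts of Rayleigh's energy identity into the single real function `Re (μ F)`.
Under the Kelvin–Arnol'd condition its derivative is a sum of nonnegative terms, one of them
`k²/r |H|²`. A nondecreasing function with equal end values is constant, so this derivative
vanishes, and with it `G`. No integration is needed.
-/

open Set Filter Topology Complex ComplexConjugate

theorem derivWithin_Icc_eventuallyEq_deriv {E : Type*} [NormedAddCommGroup E] [NormedSpace ℝ E]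
    (f : ℝ → E) {a b x : ℝ} (hx : x ∈ Ioo a b) : derivWithin f (Icc a b) =ᶠ[𝓝 x] deriv f :=
  eventually_of_mem (Ioo_mem_nhds hx.1 hx.2) fun _ hy =>
    derivWithin_of_mem_nhds (Icc_mem_nhds hy.1 hy.2)

theorem ContDiffOn.hasDerivAt_derivWithin_Icc {E : Type*} [NormedAddCommGroup E]
    [NormedSpace ℝ E] {f : ℝ → E} {n : WithTop ℕ∞} {a b x : ℝ} (hf : ContDiffOn ℝ n f (Icc a b))
    (hn : n ≠ 0) (hx : x ∈ Ioo a b) : HasDerivAt f (derivWithin f (Icc a b) x) x :=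
  ((hf.contDiffAt (Icc_mem_nhds hx.1 hx.2)).differentiableAt hn).hasDerivAt.congr_deriv
    (derivWithin_Icc_eventuallyEq_deriv f hx).eq_of_nhds.symm

theorem hasDerivAt_flux_of_deriv_eq {p : ℝ → ℝ} {H : ℝ → ℂ} {v : ℂ} {a b x : ℝ}
    (hφ : ContDiffOn ℝ 1 (fun y => (p y : ℂ) * derivWithin H (Icc a b) y) (Icc a b))
    (hx : x ∈ Ioo a b) (heq : deriv (fun y => (p y : ℂ) * deriv H y) x = v * H x) :
    HasDerivAt (fun y => (p y : ℂ) * derivWithin H (Icc a b) y) (v * H x) x := by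
  have hflux : (fun y => (p y : ℂ) * derivWithin H (Icc a b) y) =ᶠ[𝓝 x]
      fun y => (p y : ℂ) * deriv H y :=
    (derivWithin_Icc_eventuallyEq_deriv H hx).mono fun y hy => by simp only [hy]
  refine (hφ.hasDerivAt_derivWithin_Icc one_ne_zero hx).congr_deriv ?_
  rw [derivWithin_of_mem_nhds (Icc_mem_nhds hx.1 hx.2), hflux.deriv_eq, heq]

theorem eq_zero_of_hasDerivAt_of_nonneg_of_eq {f f' : ℝ → ℝ} {a b : ℝ}
    (hf : ContinuousOn f (Icc a b)) (hfd : ∀ x ∈ Ioo a b, HasDerivAt f (f' x) x)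
    (hf' : ∀ x ∈ Ioo a b, 0 ≤ f' x) (hab : f a = f b) : ∀ x ∈ Ioo a b, f' x = 0 := by
  have hmono : MonotoneOn f (Icc a b) := by
    refine monotoneOn_of_deriv_nonneg (convex_Icc a b) hf ?_ ?_ <;> rw [interior_Icc]
    · exact fun x hx => (hfd x hx).differentiableAt.differentiableWithinAt
    · exact fun x hx => (hfd x hx).deriv ▸ hf' x hx
  have hconst : ∀ y ∈ Icc a b, f y = f a := fun y hy =>
    le_antisymm (hab ▸ hmono hy ⟨hy.1.trans hy.2, le_rfl⟩ hy.2)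
      (hmono ⟨le_rfl, hy.1.trans hy.2⟩ hy hy.1)
  intro x hx
  have hloc : f =ᶠ[𝓝 x] fun _ => f a :=
    eventually_of_mem (Icc_mem_nhds hx.1 hx.2) hconst
  exact (hfd x hx).unique ((hasDerivAt_const x (f a)).congr_of_eventuallyEq hloc)

theorem re_one_add_I_mul_div_ofReal_sub (u α : ℝ) {c : ℂ} (hc : c.im ≠ 0) :
    ((1 + I * (((α - c.re) / c.im : ℝ) : ℂ)) / (u - c)).re = (u - α) / normSq (u - c) := by
  rw [div_re]
  simp only [add_re, one_re, mul_re, I_re, I_im, sub_re, ofReal_re, sub_im, ofReal_im, add_im,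
    one_im, mul_im]
  field_simp
  ring

theorem hasDerivAt_mul_conj_of_flux {p : ℝ} {φ H : ℝ → ℂ} {h' v : ℂ} {x : ℝ}
    (hH : HasDerivAt H h' x) (hφ : HasDerivAt φ (v * H x) x) (hφx : φ x = p * h') :
    HasDerivAt (fun y => φ y * conj (H y)) (v * normSq (H x) + p * normSq h') x := by
  have hconj : HasDerivAt (fun y => conj (H y)) (conj h') x := hH.star
  refine (hφ.mul hconj).congr_deriv ?_
  rw [hφx, mul_assoc, mul_conj, mul_assoc, mul_conj]

theorem mul_normSq_eq_zero_of_rayleigh {a b α : ℝ} {c : ℂ} {p w q U : ℝ → ℝ} {H H' : ℝ → ℂ}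
    (hc : c.im ≠ 0) (hHc : ContinuousOn H (Icc a b))
    (hφc : ContinuousOn (fun y => (p y : ℂ) * H' y) (Icc a b)) (ha : H a = 0) (hb : H b = 0)
    (hH : ∀ x ∈ Ioo a b, HasDerivAt H (H' x) x)
    (hφ : ∀ x ∈ Ioo a b,
      HasDerivAt (fun y => (p y : ℂ) * H' y) ((w x - q x / (U x - c)) * H x) x)
    (hp : ∀ x ∈ Ioo a b, 0 ≤ p x) (hw : ∀ x ∈ Ioo a b, 0 ≤ w x)
    (hKA : ∀ x ∈ Ioo a b, q x * (U x - α) ≤ 0) :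
    ∀ x ∈ Ioo a b, w x * normSq (H x) = 0 := by
  set μ : ℂ := 1 + I * (((α - c.re) / c.im : ℝ) : ℂ)
  set e : ℝ → ℝ := fun x => -(q x * (U x - α)) / normSq (U x - c)
  set Ψ : ℝ → ℝ := fun y => (μ * ((p y : ℂ) * H' y * conj (H y))).re
  set Ψ' : ℝ → ℝ := fun x => (w x + e x) * normSq (H x) + p x * normSq (H' x)
  have hΨ : ∀ x ∈ Ioo a b, HasDerivAt Ψ (Ψ' x) x := by
    intro x hx
    have hF := (hasDerivAt_mul_conj_of_flux (hH x hx) (hφ x hx) rfl).const_mul μ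
    refine (reCLM.hasFDerivAt.comp_hasDerivAt x hF).congr_deriv ?_
    have hμF : μ * ((w x - q x / (U x - c)) * normSq (H x) + p x * normSq (H' x))
        = ((w x * normSq (H x) + p x * normSq (H' x) : ℝ) : ℂ) * μ
          - ((q x * normSq (H x) : ℝ) : ℂ) * (μ / (U x - c)) := by
      push_cast; ring
    have hμ_re : μ.re = 1 := by simp [μ]
    have hμ_div : (μ / (U x - c)).re = (U x - α) / normSq (U x - c) :=
      re_one_add_I_mul_div_ofReal_sub (U x) α hc
    simp only [reCLM_apply, hμF, sub_re, re_ofReal_mul, hμ_re, hμ_div, Ψ', e]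
    ring
  have hΨc : ContinuousOn Ψ (Icc a b) :=
    continuous_re.comp_continuousOn
      (continuousOn_const.mul (hφc.mul (continuous_conj.comp_continuousOn hHc)))
  have he : ∀ x ∈ Ioo a b, 0 ≤ e x := fun x hx =>
    div_nonneg (neg_nonneg.mpr (hKA x hx)) (normSq_nonneg _)
  have hΨ'_nonneg : ∀ x ∈ Ioo a b, 0 ≤ Ψ' x := fun x hx =>
    add_nonneg (mul_nonneg (add_nonneg (hw x hx) (he x hx)) (normSq_nonneg _))
      (mul_nonneg (hp x hx) (normSq_nonneg _))
  have hΨ'_zero := eq_zero_of_hasDerivAt_of_nonneg_of_eq hΨc hΨ hΨ'_nonneg (by simp [Ψ, ha, hb])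
  intro x hx
  have h1 : 0 ≤ e x * normSq (H x) := mul_nonneg (he x hx) (normSq_nonneg _)
  have h2 : 0 ≤ p x * normSq (H' x) := mul_nonneg (hp x hx) (normSq_nonneg _)
  have h3 : 0 ≤ w x * normSq (H x) := mul_nonneg (hw x hx) (normSq_nonneg _)
  have h4 := hΨ'_zero x hx
  simp only [Ψ', add_mul] at h4
  linarith

theorem stmt_0_general
    (ri ro : ℝ) (hri : 0 < ri) (hio : ri < ro)
    (N k : ℝ) (hk : 0 < k)
    (c : ℂ) (hc : c.im ≠ 0)
    (U Q : ℝ → ℝ)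
    (G : ℝ → ℂ)
    (hG : ContDiffOn ℝ 2 G (Set.Icc ri ro))
    (hGi : G ri = 0) (hGo : G ro = 0)
    (heq : ∀ r ∈ Set.Icc ri ro,
      deriv (fun s : ℝ => ((s / (N ^ 2 + s ^ 2) : ℝ) : ℂ) *
          deriv (fun t : ℝ => (t : ℂ) * G t) s) r
        - (k : ℂ) ^ 2 * G r
        + ((deriv Q r : ℝ) : ℂ) / ((U r : ℂ) - c) * ((r : ℂ) * G r) = 0)
    (α : ℝ)
    (hKA : ∀ r ∈ Set.Icc ri ro, deriv Q r * (U r - α) ≤ 0) :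
    ∀ r ∈ Set.Icc ri ro, G r = 0 := by
  set p : ℝ → ℝ := fun s => s / (N ^ 2 + s ^ 2)
  set H : ℝ → ℂ := fun t => (t : ℂ) * G t
  set H' := derivWithin H (Icc ri ro)
  have hp : ContDiffOn ℝ 1 p (Icc ri ro) :=
    contDiffOn_id.div (by fun_prop) fun x hx => (add_pos_of_nonneg_of_pos (sq_nonneg N)
      (pow_pos (hri.trans_le hx.1) 2)).ne'
  have hHC : ContDiffOn ℝ 2 H (Icc ri ro) := ofRealCLM.contDiff.contDiffOn.mul hG
  have hφC : ContDiffOn ℝ 1 (fun y => (p y : ℂ) * H' y) (Icc ri ro) :=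
    (ofRealCLM.contDiff.comp_contDiffOn hp).mul
      (hHC.derivWithin (uniqueDiffOn_Icc hio) (by norm_num))
  have hH : ∀ x ∈ Ioo ri ro, HasDerivAt H (H' x) x := fun x hx =>
    hHC.hasDerivAt_derivWithin_Icc two_ne_zero hx
  have hφ : ∀ x ∈ Ioo ri ro, HasDerivAt (fun y => (p y : ℂ) * H' y)
      ((((k ^ 2 / x : ℝ) : ℂ) - ((deriv Q x : ℝ) : ℂ) / (U x - c)) * H x) x := by
    intro x hx
    refine hasDerivAt_flux_of_deriv_eq hφC hx ?_
    have hx0 : (x : ℂ) ≠ 0 := ofReal_ne_zero.mpr (hri.trans hx.1).ne'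
    simp only [H]
    push_cast
    field_simp
    linear_combination heq x (Ioo_subset_Icc_self hx)
  have hzero := mul_normSq_eq_zero_of_rayleigh hc hHC.continuousOn hφC.continuousOn
    (by simp [H, hGi]) (by simp [H, hGo]) hH hφ
    (fun x hx => div_nonneg (hri.trans hx.1).le (by positivity))
    (fun x hx => div_nonneg (sq_nonneg k) (hri.trans hx.1).le)
    (fun x hx => hKA x (Ioo_subset_Icc_self hx))
  intro r hr
  rcases hr.1.eq_or_lt with rfl | h1
  · exact hGi
  rcases hr.2.eq_or_lt with rfl | h2
  · exact hGo
  simpa [H, hk.ne', (hri.trans h1).ne'] using hzero r ⟨h1, h2⟩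

/-- Kelvin–Arnol'd I / Batchelor–Gill sufficient condition for stability of
axisymmetric base flows in an annulus: if there exists `α` with
`Q'(r) * (U r - α) ≤ 0` on `[ri, ro]`, then the Rayleigh-type equation has no
nontrivial solution with `Im c ≠ 0`. -/
theorem stmt_0
    (ri ro : ℝ) (hri : 0 < ri) (hio : ri < ro)
    (N k : ℝ) (hN : 0 ≤ N) (hk : 0 < k)
    (c : ℂ) (hc : c.im ≠ 0)
    (U Q : ℝ → ℝ)
    (hU : ContDiffOn ℝ 2 U (Set.Icc ri ro))
    (hQ : ∀ r, Q r = -(r * deriv U r) / (N ^ 2 + r ^ 2))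
    (G : ℝ → ℂ)
    (hG : ContDiffOn ℝ 2 G (Set.Icc ri ro))
    (hGi : G ri = 0) (hGo : G ro = 0)
    (heq : ∀ r ∈ Set.Icc ri ro,
      deriv (fun s : ℝ => ((s / (N ^ 2 + s ^ 2) : ℝ) : ℂ) *
          deriv (fun t : ℝ => (t : ℂ) * G t) s) r
        - (k : ℂ) ^ 2 * G r
        + ((deriv Q r : ℝ) : ℂ) / ((U r : ℂ) - c) * ((r : ℂ) * G r) = 0)
    (α : ℝ)
    (hKA : ∀ r ∈ Set.Icc ri ro, deriv Q r * (U r - α) ≤ 0) :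
    ∀ r ∈ Set.Icc ri ro, G r = 0 :=
  stmt_0_general ri ro hri hio N k hk c hc U Q G hG hGi hGo heq α hKA
end

section
/- Suppose Q'(r) ≠ 0 for every r ∈ [r_i, r_o] (so Q' has no zero in the closed annular gap). Then G(r) = 0 for all r ∈ [r_i, r_o]; that is, the Rayleigh-type equation admits no nontrivial solution with Im c ≠ 0. (This is the extension of Rayleigh's inflection-point theorem to axisymmetric base flows.) -/
open Real MeasureTheory

/-!
Multiply the equation by the conjugate of `F = r G` and integrate: after an integration by parts,
whose boundary terms vanish with `G`, the principal part becomes `-∫ r/(N²+r²) |F'|²`, which is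
real, and so is the `k²` term. The imaginary part of the identity is
`Im c · ∫ Q' |F|² / |U - c|² = 0`. A continuous `Q'` without zeros has constant sign on
`[r_i, r_o]`, so `|F|²` vanishes identically.
-/

open Set

theorem IsPreconnected.forall_pos_or_forall_neg {X : Type*} [TopologicalSpace X] {s : Set X}
    (hs : IsPreconnected s) {f : X → ℝ} (hf : ContinuousOn f s) (hf0 : ∀ x ∈ s, f x ≠ 0) :
    (∀ x ∈ s, 0 < f x) ∨ ∀ x ∈ s, f x < 0 := by
  by_contra! h
  obtain ⟨⟨a, ha, hfa⟩, b, hb, hfb⟩ := h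
  obtain ⟨x, hx, hfx⟩ := hs.intermediate_value ha hb hf ⟨hfa, hfb⟩
  exact hf0 x hx hfx

theorem eq_zero_of_integral_mul_eq_zero {a b : ℝ} (hab : a < b) {f g : ℝ → ℝ}
    (hf : ContinuousOn f (Icc a b)) (hg : ContinuousOn g (Icc a b))
    (hf0 : ∀ x ∈ Icc a b, f x ≠ 0) (hg0 : ∀ x ∈ Icc a b, 0 ≤ g x)
    (hfg : ∫ x in a..b, f x * g x = 0) : ∀ x ∈ Icc a b, g x = 0 := by
  wlog hpos : ∀ x ∈ Icc a b, 0 < f x generalizing f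
  · have hneg := (isPreconnected_Icc.forall_pos_or_forall_neg hf hf0).resolve_left hpos
    refine this hf.neg (fun x hx => neg_ne_zero.2 (hf0 x hx)) ?_ fun x hx => neg_pos.2 (hneg x hx)
    simp only [Pi.neg_apply, neg_mul, intervalIntegral.integral_neg, hfg, neg_zero]
  intro x hx
  by_contra hgx
  have hint : 0 < ∫ x in a..b, f x * g x :=
    intervalIntegral.integral_pos hab (hf.mul hg)
      (fun y hy => mul_nonneg (hpos y (Ioc_subset_Icc_self hy)).le (hg0 y (Ioc_subset_Icc_self hy)))
      ⟨x, hx, mul_pos (hpos x hx) ((hg0 x hx).lt_of_ne' hgx)⟩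
  exact hint.ne' hfg

theorem ContDiffOn.differentiableAt_deriv {E : Type*} [NormedAddCommGroup E] [NormedSpace ℝ E]
    {f : ℝ → E} {s : Set ℝ} {x : ℝ} (hf : ContDiffOn ℝ 2 f s) (hs : s ∈ nhds x) :
    DifferentiableAt ℝ (deriv f) x :=
  (((hf.mono interior_subset).deriv_of_isOpen isOpen_interior (by norm_num)).differentiableOn
    one_ne_zero).differentiableAt (isOpen_interior.mem_nhds (mem_interior_iff_mem_nhds.2 hs))

theorem Complex.im_ofReal_sub_ofReal_div_ofReal_sub (p q u : ℝ) (c : ℂ) :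
    ((p : ℂ) - (q : ℂ) / ((u : ℂ) - c)).im = -(q * c.im / Complex.normSq ((u : ℂ) - c)) := by
  simp [Complex.div_im, neg_div]

section SturmLiouville

variable {a b : ℝ} {φ : ℝ → ℝ} {F : ℝ → ℂ}

theorem integral_mul_star_eq_neg_integral_mul_norm_sq_derivWithin (hab : a < b) {R : ℝ → ℂ}
    (hφ : ContinuousOn φ (Icc a b)) (hF : ContDiffOn ℝ 1 F (Icc a b))
    (hFa : F a = 0) (hFb : F b = 0) (hR : ContinuousOn R (Icc a b))
    (hderiv : ∀ r ∈ Ioo a b, HasDerivAt (fun s => (φ s : ℂ) * deriv F s) (R r) r) :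
    ∫ r in a..b, R r * star (F r) =
      -((∫ r in a..b, φ r * ‖derivWithin F (Icc a b) r‖ ^ 2 : ℝ) : ℂ) := by
  set F' := derivWithin F (Icc a b)
  have hF' : ContinuousOn F' (Icc a b) :=
    hF.continuousOn_derivWithin (uniqueDiffOn_Icc hab) le_rfl
  have hφℂ : ContinuousOn (fun r => (φ r : ℂ)) (Icc a b) :=
    Complex.continuous_ofReal.comp_continuousOn hφ
  have hHcont : ContinuousOn (fun r => (φ r : ℂ) * F' r * star (F r)) (Icc a b) :=
    (hφℂ.mul hF').mul hF.continuousOn.star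
  have hnorm : ContinuousOn (fun r => ((φ r * ‖F' r‖ ^ 2 : ℝ) : ℂ)) (Icc a b) :=
    Complex.continuous_ofReal.comp_continuousOn (hφ.mul (hF'.norm.pow 2))
  have hRF : ContinuousOn (fun r => R r * star (F r)) (Icc a b) := hR.mul hF.continuousOn.star
  have hH : ∀ r ∈ Ioo a b, HasDerivAt (fun r => (φ r : ℂ) * F' r * star (F r))
      (R r * star (F r) + ((φ r * ‖F' r‖ ^ 2 : ℝ) : ℂ)) r := by
    intro r hr
    have hF'_eq : ∀ s ∈ Ioo a b, F' s = deriv F s := fun s hs =>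
      derivWithin_of_mem_nhds (Icc_mem_nhds hs.1 hs.2)
    have hFr : HasDerivAt F (deriv F r) r :=
      ((hF.differentiableOn one_ne_zero).differentiableAt (Icc_mem_nhds hr.1 hr.2)).hasDerivAt
    rw [hF'_eq r hr, Complex.ofReal_mul, Complex.ofReal_pow, ← Complex.mul_conj', ← mul_assoc]
    refine ((hderiv r hr).mul hFr.star).congr_of_eventuallyEq ?_
    filter_upwards [isOpen_Ioo.mem_nhds hr] with s hs
    rw [hF'_eq s hs]
    rfl
  have hFTC := intervalIntegral.integral_eq_sub_of_hasDerivAt_of_le hab.le hHcont hH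
    ((hRF.add hnorm).intervalIntegrable_of_Icc hab.le)
  rw [intervalIntegral.integral_add (hRF.intervalIntegrable_of_Icc hab.le)
    (hnorm.intervalIntegrable_of_Icc hab.le), intervalIntegral.integral_ofReal] at hFTC
  simp only [hFa, hFb, star_zero, mul_zero, sub_zero] at hFTC
  exact eq_neg_of_add_eq_zero_left hFTC

theorem integral_im_mul_normSq_eq_zero (hab : a < b) {V : ℝ → ℂ}
    (hφ : ContinuousOn φ (Icc a b)) (hF : ContDiffOn ℝ 1 F (Icc a b))
    (hFa : F a = 0) (hFb : F b = 0) (hV : ContinuousOn V (Icc a b))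
    (hderiv : ∀ r ∈ Ioo a b, HasDerivAt (fun s => (φ s : ℂ) * deriv F s) (V r * F r) r) :
    ∫ r in a..b, (V r).im * Complex.normSq (F r) = 0 := by
  have hVF : ContinuousOn (fun r => V r * F r * star (F r)) (Icc a b) :=
    (hV.mul hF.continuousOn).mul hF.continuousOn.star
  have him := Complex.imCLM.intervalIntegral_comp_comm
    (hVF.intervalIntegrable_of_Icc (μ := volume) hab.le)
  rw [integral_mul_star_eq_neg_integral_mul_norm_sq_derivWithin (R := fun r => V r * F r) hab hφ
    hF hFa hFb (hV.mul hF.continuousOn) hderiv] at him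
  simpa [mul_assoc, Complex.mul_conj] using him

end SturmLiouville

theorem stmt_3_general
    (ri ro : ℝ) (hri : 0 < ri) (hio : ri < ro)
    (N k : ℝ)
    (c : ℂ) (hc : c.im ≠ 0)
    (U Q : ℝ → ℝ)
    (hU : ContDiffOn ℝ 2 U (Set.Icc ri ro))
    (hQ'cont : ContinuousOn (deriv Q) (Set.Icc ri ro))
    (G : ℝ → ℂ)
    (hG : ContDiffOn ℝ 2 G (Set.Icc ri ro))
    (hGi : G ri = 0) (hGo : G ro = 0)
    (heq : ∀ r ∈ Set.Icc ri ro,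
      deriv (fun s : ℝ => ((s / (N ^ 2 + s ^ 2) : ℝ) : ℂ) *
          deriv (fun t : ℝ => (t : ℂ) * G t) s) r
        - (k : ℂ) ^ 2 * G r
        + ((deriv Q r : ℝ) : ℂ) / ((U r : ℂ) - c) * ((r : ℂ) * G r) = 0)
    (hQ'ne : ∀ r ∈ Set.Icc ri ro, deriv Q r ≠ 0) :
    ∀ r ∈ Set.Icc ri ro, G r = 0 := by
  have hpos : ∀ r ∈ Icc ri ro, 0 < r := fun r hr => hri.trans_le hr.1
  set F : ℝ → ℂ := fun t => (t : ℂ) * G t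
  have hF : ContDiffOn ℝ 2 F (Icc ri ro) := Complex.ofRealCLM.contDiff.contDiffOn.mul hG
  set φ : ℝ → ℝ := fun s => s / (N ^ 2 + s ^ 2)
  have hφ : ∀ r ∈ Icc ri ro, DifferentiableAt ℝ φ r := fun r hr =>
    differentiableAt_id.div (by fun_prop) (by have := hpos r hr; positivity)
  set V : ℝ → ℂ := fun r => ((k ^ 2 / r : ℝ) : ℂ) - ((deriv Q r : ℝ) : ℂ) / ((U r : ℂ) - c)
  have hUc : ∀ r, (U r : ℂ) - c ≠ 0 := fun r h => hc (by simpa using (congrArg Complex.im h).symm)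
  have hV : ContinuousOn V (Icc ri ro) :=
    (Complex.continuous_ofReal.comp_continuousOn (continuousOn_const.div continuousOn_id
      fun r hr => (hpos r hr).ne')).sub ((Complex.continuous_ofReal.comp_continuousOn
      hQ'cont).div ((Complex.continuous_ofReal.comp_continuousOn hU.continuousOn).sub
      continuousOn_const) fun r _ => hUc r)
  have hVim : ∀ r ∈ Icc ri ro, (V r).im ≠ 0 := fun r hr => by
    rw [Complex.im_ofReal_sub_ofReal_div_ofReal_sub, neg_ne_zero]
    exact div_ne_zero (mul_ne_zero (hQ'ne r hr) hc) (Complex.normSq_pos.2 (hUc r)).ne'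
  have hderiv : ∀ r ∈ Ioo ri ro, HasDerivAt (fun s => (φ s : ℂ) * deriv F s) (V r * F r) r := by
    intro r hr
    have hd : DifferentiableAt ℝ (fun s => (φ s : ℂ) * deriv F s) r :=
      (hφ r (Ioo_subset_Icc_self hr)).hasDerivAt.ofReal_comp.differentiableAt.mul
        (hF.differentiableAt_deriv (Icc_mem_nhds hr.1 hr.2))
    have hk : ((k ^ 2 / r : ℝ) : ℂ) * r = k ^ 2 := by
      rw [← Complex.ofReal_mul, div_mul_cancel₀ _ (hpos r (Ioo_subset_Icc_self hr)).ne',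
        Complex.ofReal_pow]
    have h : deriv (fun s => (φ s : ℂ) * deriv F s) r = V r * F r := by
      linear_combination heq r (Ioo_subset_Icc_self hr) - G r * hk
    exact h ▸ hd.hasDerivAt
  have hF0 := eq_zero_of_integral_mul_eq_zero hio (Complex.continuous_im.comp_continuousOn hV)
    (Complex.continuous_normSq.comp_continuousOn hF.continuousOn) hVim
    (fun r _ => Complex.normSq_nonneg (F r))
    (integral_im_mul_normSq_eq_zero hio
      (continuousOn_of_forall_continuousAt fun r hr => (hφ r hr).continuousAt)
      (hF.of_le one_le_two) (by simp [F, hGi]) (by simp [F, hGo]) hV hderiv)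
  intro r hr
  simpa [F, (hpos r hr).ne'] using hF0 r hr

/-- Extension of Rayleigh's inflection-point theorem to axisymmetric base
flows: if `Q'` has no zero in the closed annular gap `[ri, ro]`, then the
Rayleigh-type equation admits no nontrivial solution with `Im c ≠ 0`. -/
theorem stmt_3
    (ri ro : ℝ) (hri : 0 < ri) (hio : ri < ro)
    (N k : ℝ) (hN : 0 ≤ N) (hk : 0 < k)
    (c : ℂ) (hc : c.im ≠ 0)
    (U Q : ℝ → ℝ)
    (hU : ContDiffOn ℝ 2 U (Set.Icc ri ro))
    (hQ : ∀ r, Q r = -(r * deriv U r) / (N ^ 2 + r ^ 2))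
    (hQ'cont : ContinuousOn (deriv Q) (Set.Icc ri ro))
    (G : ℝ → ℂ)
    (hG : ContDiffOn ℝ 2 G (Set.Icc ri ro))
    (hGi : G ri = 0) (hGo : G ro = 0)
    (heq : ∀ r ∈ Set.Icc ri ro,
      deriv (fun s : ℝ => ((s / (N ^ 2 + s ^ 2) : ℝ) : ℂ) *
          deriv (fun t : ℝ => (t : ℂ) * G t) s) r
        - (k : ℂ) ^ 2 * G r
        + ((deriv Q r : ℝ) : ℂ) / ((U r : ℂ) - c) * ((r : ℂ) * G r) = 0)
    (hQ'ne : ∀ r ∈ Set.Icc ri ro, deriv Q r ≠ 0) :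
    ∀ r ∈ Set.Icc ri ro, G r = 0 :=
  stmt_3_general ri ro hri hio N k c hc U Q hU hQ'cont G hG hGi hGo heq hQ'ne
end

section
/- The following imaginary-part integral identity holds: ∫_{r_i}^{r_o} ( Q'(r)/|U(r) − c|² )·|r G(r)|² dr = 0. -/
open Real MeasureTheory
open scoped Topology

private lemma stmt5_imcalc (k2 b d x : ℝ) (z gg w : ℂ) (hw : w ≠ 0) :
    ((((k2 : ℝ) : ℂ) * z - ((b : ℝ) : ℂ) / w * ((x : ℂ) * z)) * star ((x : ℂ) * z)
        + ((d : ℝ) : ℂ) * gg * star gg).im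
      = w.im * (b * Complex.normSq ((x : ℂ) * z) / Complex.normSq w) := by
  have hnsq : Complex.normSq w ≠ 0 := (Complex.normSq_pos.mpr hw).ne'
  rw [Complex.normSq_apply] at hnsq
  simp only [Complex.star_def]
  simp [Complex.mul_im, Complex.mul_re, Complex.sub_im, Complex.sub_re, Complex.add_im,
    Complex.add_re, Complex.div_im, Complex.div_re, Complex.ofReal_re, Complex.ofReal_im,
    Complex.conj_re, Complex.conj_im, Complex.normSq_apply]
  field_simp
  ring


/-- Imaginary-part integral identity obtained by multiplying the Rayleigh-type
equation by the complex conjugate of `r G` and integrating over the annulus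
(valid since `Im c ≠ 0`). -/
theorem stmt_5
    (ri ro : ℝ) (hri : 0 < ri) (hio : ri < ro)
    (N k : ℝ) (hN : 0 ≤ N) (hk : 0 < k)
    (c : ℂ) (hc : c.im ≠ 0)
    (U Q : ℝ → ℝ)
    (hU : ContDiffOn ℝ 2 U (Set.Icc ri ro))
    (hQ : ∀ r, Q r = -(r * deriv U r) / (N ^ 2 + r ^ 2))
    (G : ℝ → ℂ)
    (hG : ContDiffOn ℝ 2 G (Set.Icc ri ro))
    (hGi : G ri = 0) (hGo : G ro = 0)
    (heq : ∀ r ∈ Set.Icc ri ro,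
      deriv (fun s : ℝ => ((s / (N ^ 2 + s ^ 2) : ℝ) : ℂ) *
          deriv (fun t : ℝ => (t : ℂ) * G t) s) r
        - (k : ℂ) ^ 2 * G r
        + ((deriv Q r : ℝ) : ℂ) / ((U r : ℂ) - c) * ((r : ℂ) * G r) = 0) :
    ∫ r in ri..ro,
      (deriv Q r / ‖(U r : ℂ) - c‖ ^ 2)
        * ‖(r : ℂ) * G r‖ ^ 2 = 0 := by
  have hle : ri ≤ ro := hio.le
  have husd : UniqueDiffOn ℝ (Set.Icc ri ro) := uniqueDiffOn_Icc hio
  have hden : ∀ r ∈ Set.Icc ri ro, N ^ 2 + r ^ 2 ≠ 0 := by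
    intro r hr
    have h1 : 0 < r := lt_of_lt_of_le hri hr.1
    have := pow_pos h1 2
    have := sq_nonneg N
    positivity
  set F : ℝ → ℂ := fun t : ℝ => (t : ℂ) * G t with hF_def
  set AF : ℝ → ℂ := fun s : ℝ => ((s / (N ^ 2 + s ^ 2) : ℝ) : ℂ) * deriv F s with hAF_def
  have hF : ContDiffOn ℝ 2 F (Set.Icc ri ro) :=
    (Complex.ofRealCLM.contDiff.contDiffOn).mul hG
  set g : ℝ → ℂ := derivWithin F (Set.Icc ri ro) with hg_def
  have hgC : ContDiffOn ℝ 1 g (Set.Icc ri ro) := hF.derivWithin husd (by norm_num)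
  -- the regularized version of Q and its derivative
  set u : ℝ → ℝ := derivWithin U (Set.Icc ri ro) with hu_def
  have huC : ContDiffOn ℝ 1 u (Set.Icc ri ro) := hU.derivWithin husd (by norm_num)
  set Qt : ℝ → ℝ := fun r : ℝ => -(r * u r) / (N ^ 2 + r ^ 2) with hQt_def
  have hQtC : ContDiffOn ℝ 1 Qt (Set.Icc ri ro) := by
    apply ContDiffOn.div
    · exact ((contDiffOn_id).mul huC).neg
    · exact (contDiff_const.add (contDiff_id.pow 2)).contDiffOn
    · exact hden
  set q : ℝ → ℝ := derivWithin Qt (Set.Icc ri ro) with hq_def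
  have hq0 : ContDiffOn ℝ 0 q (Set.Icc ri ro) := hQtC.derivWithin husd (by norm_num)
  have hqC : ContinuousOn q (Set.Icc ri ro) := hq0.continuousOn
  have hq : ∀ r ∈ Set.Ioo ri ro, deriv Q r = q r := by
    intro r hr
    have hmem : Set.Icc ri ro ∈ 𝓝 r := Icc_mem_nhds hr.1 hr.2
    have hEq : Q =ᶠ[𝓝 r] Qt := by
      filter_upwards [Ioo_mem_nhds hr.1 hr.2] with x hx
      have hx' : derivWithin U (Set.Icc ri ro) x = deriv U x :=
        derivWithin_of_mem_nhds (Icc_mem_nhds hx.1 hx.2)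
      rw [hQ x, hQt_def]
      simp [hu_def, hx']
    calc deriv Q r = deriv Qt r := hEq.deriv_eq
      _ = q r := (derivWithin_of_mem_nhds hmem).symm
  have hgF : ∀ r ∈ Set.Ioo ri ro, HasDerivAt F (g r) r ∧ deriv F r = g r := by
    intro r hr
    have hmem : Set.Icc ri ro ∈ 𝓝 r := Icc_mem_nhds hr.1 hr.2
    have hd : DifferentiableAt ℝ F r :=
      (hF.contDiffAt hmem).differentiableAt (by norm_num)
    have he : deriv F r = g r := (derivWithin_of_mem_nhds hmem).symm
    exact ⟨he ▸ hd.hasDerivAt, he⟩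
  have hUc : ∀ r : ℝ, ((U r : ℂ) - c) ≠ 0 := by
    intro r h
    apply hc
    have := congrArg Complex.im h
    simpa using this.symm
  -- the function we differentiate and its derivative
  set φ : ℝ → ℂ := fun r : ℝ => ((r / (N ^ 2 + r ^ 2) : ℝ) : ℂ) * g r * star (F r)
    with hφ_def
  set D : ℝ → ℂ := fun r : ℝ =>
      ((k : ℂ) ^ 2 * G r - ((q r : ℝ) : ℂ) / ((U r : ℂ) - c) * F r) * star (F r)
        + ((r / (N ^ 2 + r ^ 2) : ℝ) : ℂ) * g r * star (g r) with hD_def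
  have hder : ∀ r ∈ Set.Ioo ri ro, HasDerivAt φ (D r) r := by
    intro r hr
    have hmem : Set.Icc ri ro ∈ 𝓝 r := Icc_mem_nhds hr.1 hr.2
    have hIoo : Set.Ioo ri ro ∈ 𝓝 r := Ioo_mem_nhds hr.1 hr.2
    have hne : N ^ 2 + r ^ 2 ≠ 0 := hden r (Set.Ioo_subset_Icc_self hr)
    have hAd : DifferentiableAt ℝ (fun s : ℝ => ((s / (N ^ 2 + s ^ 2) : ℝ) : ℂ)) r := by
      apply Complex.ofRealCLM.differentiableAt.comp
      exact differentiableAt_id.div (by fun_prop) hne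
    have hgd : DifferentiableAt ℝ g r := (hgC.contDiffAt hmem).differentiableAt one_ne_zero
    have h1diff : DifferentiableAt ℝ AF r := by
      have hAg : DifferentiableAt ℝ (fun s : ℝ => ((s / (N ^ 2 + s ^ 2) : ℝ) : ℂ) * g s) r :=
        hAd.mul hgd
      apply hAg.congr_of_eventuallyEq
      filter_upwards [hIoo] with x hx
      rw [hAF_def]
      simp only [(hgF x hx).2]
    have h1 : HasDerivAt AF (deriv AF r) r := h1diff.hasDerivAt
    have h2 : HasDerivAt (fun s : ℝ => star (F s)) (star (g r)) r := (hgF r hr).1.star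
    have hprod := h1.mul h2
    have hEqφ : φ =ᶠ[𝓝 r] fun s : ℝ => AF s * star (F s) := by
      filter_upwards [hIoo] with x hx
      rw [hφ_def, hAF_def]
      simp only [(hgF x hx).2]
    have h3 : HasDerivAt φ (deriv AF r * star (F r) + AF r * star (g r)) r :=
      hprod.congr_of_eventuallyEq hEqφ
    have hval : deriv AF r = (k : ℂ) ^ 2 * G r - ((q r : ℝ) : ℂ) / ((U r : ℂ) - c) * F r := by
      have h0 := heq r (Set.Ioo_subset_Icc_self hr)
      rw [← hq r hr]
      have : F r = (r : ℂ) * G r := rfl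
      rw [this]
      linear_combination h0
    have hDr : D r = deriv AF r * star (F r) + AF r * star (g r) := by
      rw [hval, hD_def, hAF_def]
      simp only [(hgF r hr).2]
      try ring
    rw [hDr]
    exact h3
  -- continuity facts
  have hAc : ContinuousOn (fun r : ℝ => ((r / (N ^ 2 + r ^ 2) : ℝ) : ℂ)) (Set.Icc ri ro) :=
    Complex.continuous_ofReal.comp_continuousOn
      (continuousOn_id.div (by fun_prop) hden)
  have hφc : ContinuousOn φ (Set.Icc ri ro) :=
    (hAc.mul hgC.continuousOn).mul (continuous_star.comp_continuousOn hF.continuousOn)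
  have hDc : ContinuousOn D (Set.Icc ri ro) := by
    apply ContinuousOn.add
    · apply ContinuousOn.mul
      · apply ContinuousOn.sub
        · exact continuousOn_const.mul hG.continuousOn
        · apply ContinuousOn.mul
          · apply ContinuousOn.div
            · exact Complex.continuous_ofReal.comp_continuousOn hqC
            · exact (Complex.continuous_ofReal.comp_continuousOn hU.continuousOn).sub
                continuousOn_const
            · exact fun r _ => hUc r
          · exact hF.continuousOn
      · exact continuous_star.comp_continuousOn hF.continuousOn
    · exact (hAc.mul hgC.continuousOn).mul (continuous_star.comp_continuousOn hgC.continuousOn)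
  have hDint : IntervalIntegrable D volume ri ro := by
    apply ContinuousOn.intervalIntegrable
    rwa [Set.uIcc_of_le hle]
  have hFTC : ∫ r in ri..ro, D r = φ ro - φ ri :=
    intervalIntegral.integral_eq_sub_of_hasDerivAt_of_le hle hφc hder hDint
  have hzero : ∫ r in ri..ro, D r = 0 := by
    rw [hFTC, hφ_def, hF_def]
    simp [hGi, hGo]
  -- pass to imaginary parts
  have hInt : IntegrableOn D (Set.Ioc ri ro) :=
    (intervalIntegrable_iff_integrableOn_Ioc_of_le hle).1 hDint
  have hIoc : ∫ r in Set.Ioc ri ro, D r = 0 := by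
    rw [← intervalIntegral.integral_of_le hle]; exact hzero
  have him : ∫ r in Set.Ioc ri ro, (D r).im = 0 := by
    have h := integral_im (μ := volume.restrict (Set.Ioc ri ro)) hInt
    rw [hIoc] at h
    simpa using h
  have hDim : ∀ x : ℝ, (D x).im
      = -c.im * (q x * Complex.normSq (F x) / Complex.normSq ((U x : ℂ) - c)) := by
    intro x
    have h := stmt5_imcalc (k ^ 2) (q x) (x / (N ^ 2 + x ^ 2)) x (G x) (g x)
      ((U x : ℂ) - c) (hUc x)
    have hcast : (((k ^ 2 : ℝ)) : ℂ) = (k : ℂ) ^ 2 := by push_cast; ring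
    rw [hcast] at h
    have him' : ((U x : ℂ) - c).im = -c.im := by simp
    rw [him'] at h
    rw [hD_def, hF_def]
    simpa using h
  have hmain : ∫ r in Set.Ioc ri ro,
      q r * Complex.normSq (F r) / Complex.normSq ((U r : ℂ) - c) = 0 := by
    have h2 := him
    simp only [hDim] at h2
    rw [integral_const_mul] at h2
    rcases mul_eq_zero.1 h2 with h | h
    · exact absurd (neg_eq_zero.1 h) hc
    · exact h
  have hfin : ∫ r in Set.Ioo ri ro,
        deriv Q r / ‖(U r : ℂ) - c‖ ^ 2 * ‖(r : ℂ) * G r‖ ^ 2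
      = ∫ r in Set.Ioo ri ro,
        q r * Complex.normSq (F r) / Complex.normSq ((U r : ℂ) - c) := by
    apply setIntegral_congr_fun measurableSet_Ioo
    intro x hx
    simp only [Complex.sq_norm, hF_def]
    rw [hq x hx]
    ring
  rw [intervalIntegral.integral_of_le hle, integral_Ioc_eq_integral_Ioo, hfin,
    ← integral_Ioc_eq_integral_Ioo]
  exact hmain
end

section
/- For every continuously differentiable function g : [r_i, r_o] → ℝ with g(r_i) = g(r_o) = 0, the weighted Wirtinger-type inequality ∫_{r_i}^{r_o} r·g'(r)² dr ≥ (π/ln η)² · ∫_{r_i}^{r_o} g(r)²/r dr holds. -/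
open Real MeasureTheory

/-!
Substituting `r = exp t` turns `∫ r g'(r)² dr` and `∫ g(r)² / r dr` into `∫ f'(t)² dt` and
`∫ f(t)² dt` for `f = g ∘ exp` on an interval of length `L = log (ro / ri)`, so the claim is
Wirtinger's inequality `∫ f'² ≥ (π / L)² ∫ f²` for `f` vanishing at both ends.

That inequality follows from Picone's identity: with `ω = π / L` and `θ = ω (t - a)`, the function
`H = ω cot θ f²` has derivative `f'² - ω² f² - (f' - ω cot θ f)²`, so `∫ₐᵗ (f'² - ω² f²) - H(t)` is
monotone on `[a, b]`; comparing its values at `a` and `b` gives the inequality. Continuity of `H` at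
the endpoints, where it vanishes, holds because `f` is Lipschitz and vanishes there while `sin θ` is
bounded below by a multiple of the distance to the boundary.
-/

open Set Filter Topology

theorem two_div_pi_mul_min_le_sin {x : ℝ} (h₀ : 0 ≤ x) (hπ : x ≤ π) :
    2 / π * min x (π - x) ≤ sin x := by
  rcases le_total x (π / 2) with h | h
  · exact (mul_le_mul_of_nonneg_left (min_le_left _ _) (by positivity)).trans (mul_le_sin h₀ h)
  · rw [← sin_pi_sub]
    exact (mul_le_mul_of_nonneg_left (min_le_right _ _) (by positivity)).trans
      (mul_le_sin (by linarith) (by linarith))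

theorem abs_le_mul_min_of_hasDerivWithinAt {a b M t : ℝ} {f f' : ℝ → ℝ}
    (hf : ∀ s ∈ Icc a b, HasDerivWithinAt f (f' s) (Icc a b) s)
    (hM : ∀ s ∈ Icc a b, |f' s| ≤ M) (ha : f a = 0) (hb : f b = 0) (ht : t ∈ Icc a b) :
    |f t| ≤ M * min (t - a) (b - t) := by
  have hab : a ≤ b := ht.1.trans ht.2
  have hM₀ : 0 ≤ M := (abs_nonneg _).trans (hM a (left_mem_Icc.2 hab))
  have hleft := (convex_Icc a b).norm_image_sub_le_of_norm_hasDerivWithin_le hf hM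
    (left_mem_Icc.2 hab) ht
  have hright := (convex_Icc a b).norm_image_sub_le_of_norm_hasDerivWithin_le hf hM
    ht (right_mem_Icc.2 hab)
  simp only [ha, hb, Real.norm_eq_abs, sub_zero, zero_sub, abs_neg] at hleft hright
  rw [abs_of_nonneg (sub_nonneg.2 ht.1)] at hleft
  rw [abs_of_nonneg (sub_nonneg.2 ht.2)] at hright
  rw [mul_min_of_nonneg _ _ hM₀]
  exact le_min hleft hright

section Wirtinger

variable {a b : ℝ} {f f' : ℝ → ℝ}

/-- `ω cot (ω (t - a))` is the logarithmic derivative of `sin (ω (t - a))`, the first Dirichlet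
eigenfunction of `-d²/dt²` on `[a, b]`. -/
noncomputable def piconeTerm (a b : ℝ) (f : ℝ → ℝ) (t : ℝ) : ℝ :=
  π / (b - a) * cot (π / (b - a) * (t - a)) * f t ^ 2

theorem hasDerivAt_piconeTerm (hab : a < b) {t : ℝ} (ht : t ∈ Ioo a b)
    (hf : HasDerivAt f (f' t) t) :
    HasDerivAt (piconeTerm a b f) (f' t ^ 2 - (π / (b - a)) ^ 2 * f t ^ 2 -
      (f' t - π / (b - a) * cot (π / (b - a) * (t - a)) * f t) ^ 2) t := by
  unfold piconeTerm
  simp only [cot_eq_cos_div_sin]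
  have hω : π / (b - a) * (b - a) = π := div_mul_cancel₀ _ (sub_pos.2 hab).ne'
  have hω₀ : 0 < π / (b - a) := div_pos pi_pos (sub_pos.2 hab)
  generalize π / (b - a) = ω at hω hω₀ ⊢
  have hsin : sin (ω * (t - a)) ≠ 0 := by
    refine (sin_pos_of_pos_of_lt_pi (mul_pos hω₀ (sub_pos.2 ht.1)) ?_).ne'
    rw [← hω]; exact mul_lt_mul_of_pos_left (by linarith [ht.2]) hω₀
  have hθ : HasDerivAt (fun s => ω * (s - a)) ω t := by
    simpa using ((hasDerivAt_id t).sub_const a).const_mul ω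
  refine ((hθ.cos.fun_div hθ.sin hsin).const_mul ω |>.fun_mul (hf.fun_pow 2)).congr_deriv ?_
  field_simp
  push_cast
  ring

theorem abs_piconeTerm_le {M t : ℝ} (hab : a < b)
    (hf : ∀ s ∈ Icc a b, HasDerivWithinAt f (f' s) (Icc a b) s)
    (hM : ∀ s ∈ Icc a b, |f' s| ≤ M) (ha : f a = 0) (hb : f b = 0) (ht : t ∈ Icc a b) :
    |piconeTerm a b f t| ≤ π / 2 * M ^ 2 * min (t - a) (b - t) := by
  set d := min (t - a) (b - t)
  have hf_le : |f t| ≤ M * d := abs_le_mul_min_of_hasDerivWithinAt hf hM ha hb ht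
  have hd₀ : 0 ≤ d := le_min (sub_nonneg.2 ht.1) (sub_nonneg.2 ht.2)
  rcases hd₀.eq_or_lt with hd | hd
  · rw [← hd, mul_zero] at hf_le
    simp [piconeTerm, abs_nonpos_iff.1 hf_le, ← hd]
  have hω₀ : 0 < π / (b - a) := div_pos pi_pos (sub_pos.2 hab)
  have hsin : 2 / (b - a) * d ≤ sin (π / (b - a) * (t - a)) := by
    have hθ' : π - π / (b - a) * (t - a) = π / (b - a) * (b - t) := by
      field_simp [(sub_pos.2 hab).ne']; ring
    have h := two_div_pi_mul_min_le_sin (x := π / (b - a) * (t - a))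
      (mul_nonneg hω₀.le (sub_nonneg.2 ht.1)) (by linarith [mul_nonneg hω₀.le (sub_nonneg.2 ht.2)])
    rw [hθ', ← mul_min_of_nonneg _ _ hω₀.le] at h
    convert h using 1
    field_simp
    rfl
  have hsin₀ : 0 < sin (π / (b - a) * (t - a)) :=
    lt_of_lt_of_le (mul_pos (div_pos two_pos (sub_pos.2 hab)) hd) hsin
  have hf_sq : f t ^ 2 ≤ (M * d) ^ 2 := by
    rw [← sq_abs]; exact pow_le_pow_left₀ (abs_nonneg _) hf_le 2
  calc |piconeTerm a b f t|
      = π / (b - a) * |cos (π / (b - a) * (t - a))| * f t ^ 2 / sin (π / (b - a) * (t - a)) := by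
        rw [piconeTerm, cot_eq_cos_div_sin, abs_mul, abs_mul, abs_of_pos hω₀, abs_div,
          abs_of_pos hsin₀, abs_of_nonneg (sq_nonneg (f t))]
        ring
    _ ≤ π / (b - a) * 1 * (M * d) ^ 2 / (2 / (b - a) * d) := by
        gcongr
        exact abs_cos_le_one _
    _ = π / 2 * M ^ 2 * d := by
        field_simp [(sub_pos.2 hab).ne']

theorem continuousOn_piconeTerm {M : ℝ} (hab : a < b)
    (hf : ∀ s ∈ Icc a b, HasDerivWithinAt f (f' s) (Icc a b) s)
    (hM : ∀ s ∈ Icc a b, |f' s| ≤ M) (ha : f a = 0) (hb : f b = 0) :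
    ContinuousOn (piconeTerm a b f) (Icc a b) := by
  intro t ht
  by_cases hto : t ∈ Ioo a b
  · exact (hasDerivAt_piconeTerm hab hto ((hf t ht).hasDerivAt (Icc_mem_nhds hto.1 hto.2)))
      |>.continuousAt.continuousWithinAt
  have hbound : ∀ s ∈ Icc a b, ‖piconeTerm a b f s‖ ≤ π / 2 * M ^ 2 * min (s - a) (b - s) :=
    fun s hs => abs_piconeTerm_le hab hf hM ha hb hs
  have hmin : min (t - a) (b - t) = 0 := by
    rcases eq_endpoints_or_mem_Ioo_of_mem_Icc ht with rfl | rfl | h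
    · simp [hab.le]
    · simp [hab.le]
    · exact absurd h hto
  have hzero : piconeTerm a b f t = 0 := by
    simpa [hmin] using hbound t ht
  rw [ContinuousWithinAt, hzero]
  refine squeeze_zero_norm' (eventually_nhdsWithin_of_forall hbound) ?_
  have hcont : Continuous fun s => π / 2 * M ^ 2 * min (s - a) (b - s) := by fun_prop
  simpa [hmin] using hcont.continuousWithinAt (s := Icc a b) (x := t) |>.tendsto

theorem wirtinger_inequality (hab : a < b)
    (hf : ∀ t ∈ Icc a b, HasDerivWithinAt f (f' t) (Icc a b) t) (hf' : ContinuousOn f' (Icc a b))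
    (ha : f a = 0) (hb : f b = 0) :
    (π / (b - a)) ^ 2 * ∫ t in a..b, f t ^ 2 ≤ ∫ t in a..b, f' t ^ 2 := by
  obtain ⟨M, hM⟩ := isCompact_Icc.exists_bound_of_continuousOn hf'
  have hfc : ContinuousOn f (Icc a b) := fun t ht => (hf t ht).continuousWithinAt
  have hint : ∀ {φ : ℝ → ℝ}, ContinuousOn φ (Icc a b) → IntervalIntegrable φ volume a b :=
    fun hφ => hφ.intervalIntegrable_of_Icc hab.le
  set φ := fun t => f' t ^ 2 - (π / (b - a)) ^ 2 * f t ^ 2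
  have hφ : ContinuousOn φ (Icc a b) := by fun_prop
  set G := fun x => (∫ t in a..x, φ t) - piconeTerm a b f x
  have hG : ∀ t ∈ Ioo a b, HasDerivAt G
      ((f' t - π / (b - a) * cot (π / (b - a) * (t - a)) * f t) ^ 2) t := by
    intro t ht
    have hIcc : Icc a b ∈ 𝓝 t := Icc_mem_nhds ht.1 ht.2
    have hprim : HasDerivAt (fun x => ∫ s in a..x, φ s) (φ t) t :=
      intervalIntegral.integral_hasDerivAt_right
        ((hint hφ).mono_set (by rw [uIcc_of_le hab.le, uIcc_of_le ht.1.le]; gcongr; exact ht.2.le))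
        ((hφ.mono Ioo_subset_Icc_self).stronglyMeasurableAtFilter isOpen_Ioo t ht)
        (hφ.continuousAt hIcc)
    have hpicone := hasDerivAt_piconeTerm hab ht ((hf t (Ioo_subset_Icc_self ht)).hasDerivAt hIcc)
    exact (hprim.sub hpicone).congr_deriv (by simp only [φ]; ring)
  have hmono : MonotoneOn G (Icc a b) := by
    refine monotoneOn_of_deriv_nonneg (convex_Icc a b) ?_ ?_ ?_
    · refine ContinuousOn.sub ?_ (continuousOn_piconeTerm hab hf hM ha hb)
      simpa only [uIcc_of_le hab.le] using
        intervalIntegral.continuousOn_primitive_interval (μ := volume) (a := a) (b := b)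
          (by rw [uIcc_of_le hab.le]; exact hφ.integrableOn_Icc)
    · rw [interior_Icc]
      exact fun t ht => (hG t ht).differentiableAt.differentiableWithinAt
    · rw [interior_Icc]
      exact fun t ht => (hG t ht).deriv ▸ sq_nonneg _
  have hGab := hmono (left_mem_Icc.2 hab.le) (right_mem_Icc.2 hab.le) hab.le
  simp only [G, piconeTerm, ha, hb, intervalIntegral.integral_same] at hGab
  rw [intervalIntegral.integral_sub (hint (by fun_prop)) (hint (by fun_prop)),
    intervalIntegral.integral_const_mul] at hGab
  linarith

end Wirtinger

theorem integral_eq_integral_comp_exp {a b : ℝ} (ha : 0 < a) (hb : 0 < b) (φ : ℝ → ℝ) :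
    ∫ r in a..b, φ r = ∫ t in log a..log b, φ (exp t) * exp t := by
  simpa [exp_log ha, exp_log hb] using
    (intervalIntegral.integral_comp_mul_deriv_of_deriv_nonneg (a := log a) (b := log b) (g := φ)
      continuous_exp.continuousOn (fun t _ => hasDerivAt_exp t) (fun t _ => (exp_pos t).le)).symm

theorem integral_mul_sq_eq_integral_comp_exp {a b : ℝ} (ha : 0 < a) (hb : 0 < b) (u : ℝ → ℝ) :
    ∫ r in a..b, r * u r ^ 2 = ∫ t in log a..log b, (u (exp t) * exp t) ^ 2 := by
  rw [integral_eq_integral_comp_exp ha hb]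
  congr 1 with t
  ring

theorem integral_sq_div_eq_integral_comp_exp {a b : ℝ} (ha : 0 < a) (hb : 0 < b) (u : ℝ → ℝ) :
    ∫ r in a..b, u r ^ 2 / r = ∫ t in log a..log b, u (exp t) ^ 2 := by
  rw [integral_eq_integral_comp_exp ha hb]
  congr 1 with t
  field_simp [exp_ne_zero]

/-- Weighted Wirtinger-type inequality on the annulus `[ri, ro]` with
`η = ri / ro`. -/
theorem stmt_7
    (ri ro : ℝ) (hri : 0 < ri) (hio : ri < ro)
    (g : ℝ → ℝ) (hg : ContDiffOn ℝ 1 g (Set.Icc ri ro))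
    (hgi : g ri = 0) (hgo : g ro = 0) :
    ∫ r in ri..ro, r * (deriv g r) ^ 2
      ≥ (Real.pi / Real.log (ri / ro)) ^ 2 * ∫ r in ri..ro, (g r) ^ 2 / r := by
  have hro : 0 < ro := hri.trans hio
  set dg := derivWithin g (Icc ri ro)
  have hexp : MapsTo exp (Icc (log ri) (log ro)) (Icc ri ro) := fun t ht =>
    ⟨exp_log hri ▸ exp_le_exp.2 ht.1, exp_log hro ▸ exp_le_exp.2 ht.2⟩
  have hderiv : ∀ t ∈ Icc (log ri) (log ro),
      HasDerivWithinAt (g ∘ exp) (dg (exp t) * exp t) (Icc (log ri) (log ro)) t := fun t ht =>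
    ((hg.differentiableOn one_ne_zero) (exp t) (hexp ht)).hasDerivWithinAt.comp t
      (hasDerivAt_exp t).hasDerivWithinAt hexp
  have hderiv_cont : ContinuousOn (fun t => dg (exp t) * exp t) (Icc (log ri) (log ro)) :=
    ((hg.continuousOn_derivWithin (uniqueDiffOn_Icc hio) le_rfl).comp
      continuous_exp.continuousOn hexp).mul continuous_exp.continuousOn
  have hderiv_ae : ∫ r in ri..ro, r * deriv g r ^ 2 = ∫ r in ri..ro, r * dg r ^ 2 :=
    intervalIntegral.integral_congr_Ioo_of_le hio.le fun r hr => by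
      simp only [dg, derivWithin_of_mem_nhds (Icc_mem_nhds hr.1 hr.2)]
  have hcoeff : (π / log (ri / ro)) ^ 2 = (π / (log ro - log ri)) ^ 2 := by
    rw [log_div hri.ne' hro.ne', ← neg_sub, div_neg, neg_sq]
  rw [ge_iff_le, hderiv_ae, integral_mul_sq_eq_integral_comp_exp hri hro,
    integral_sq_div_eq_integral_comp_exp hri hro, hcoeff]
  exact wirtinger_inequality (log_lt_log hri hio) hderiv hderiv_cont
    (by simp [exp_log hri, hgi]) (by simp [exp_log hro, hgo])
end

section
/- Let N ≥ 0 be real. For every continuously differentiable function g : [r_i, r_o] → ℝ with g(r_i) = g(r_o) = 0, the Poincaré-type inequality ∫_{r_i}^{r_o} (r/(N² + r²))·g'(r)² dr ≥ ((π/ln η)²/(N² + r_o²)) · ∫_{r_i}^{r_o} g(r)²/r dr holds. -/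
/-!
Since `r / (N² + r²) ≥ r / (N² + r_o²)` on `[r_i, r_o]`, it suffices to show
`∫ r g'² ≥ k² ∫ g² / r` with `k = π / log (r_o / r_i)`; in the variable `log r` this is
Wirtinger's inequality. It follows from a ground-state (Picone) substitution: for
`c = r g₀' / g₀` with `g₀ = sin (k log (r / r_i))` one has
`r g'² - k² g² / r - (c g²)' = (r g' - c g)² / r ≥ 0`, and `c g²` tends to `0` at both endpoints
because `|c|` blows up only like the reciprocal of the distance to the endpoint while `g²`
vanishes quadratically there.
-/

open Real MeasureTheory Set Filter Topology

namespace Real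

lemma hasDerivAt_cot {x : ℝ} (hx : sin x ≠ 0) : HasDerivAt cot (-(1 + cot x ^ 2)) x := by
  have hcot : cot = cos / sin := funext cot_eq_cos_div_sin
  rw [hcot]
  refine ((hasDerivAt_cos x).div (hasDerivAt_sin x) hx).congr_deriv ?_
  rw [Pi.div_apply]
  field_simp
  ring

lemma cot_pi_sub (x : ℝ) : cot (π - x) = -cot x := by
  simp only [cot_eq_cos_div_sin, cos_pi_sub, sin_pi_sub, neg_div]

lemma cot_mul_self_le_one {x : ℝ} (h0 : 0 < x) (hx : x < π) : cot x * x ≤ 1 := by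
  rw [cot_eq_cos_div_sin]
  have hsin : 0 < sin x := sin_pos_of_pos_of_lt_pi h0 hx
  rcases le_or_gt (cos x) 0 with hcos | hcos
  · nlinarith [div_nonpos_of_nonpos_of_nonneg hcos hsin.le]
  · have hx2 : x < π / 2 := by
      by_contra! h
      linarith [cos_nonpos_of_pi_div_two_le_of_le h (by linarith)]
    have htan := lt_tan h0 hx2
    rw [tan_eq_sin_div_cos, lt_div_iff₀ hcos] at htan
    rw [div_mul_eq_mul_div, div_le_one hsin]
    linarith

lemma abs_cot_mul_min_le_one {x : ℝ} (h0 : 0 < x) (hx : x < π) :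
    |cot x| * min x (π - x) ≤ 1 := by
  rcases le_or_gt 0 (cot x) with hc | hc
  · rw [abs_of_nonneg hc]
    exact (mul_le_mul_of_nonneg_left (min_le_left _ _) hc).trans (cot_mul_self_le_one h0 hx)
  · rw [abs_of_neg hc, ← cot_pi_sub]
    have := cot_mul_self_le_one (x := π - x) (by linarith) (by linarith)
    have hc' : 0 ≤ cot (π - x) := by rw [cot_pi_sub]; linarith
    exact (mul_le_mul_of_nonneg_left (min_le_right _ _) hc').trans this

end Real

lemma abs_le_mul_min_sub_of_hasDerivWithinAt {g g' : ℝ → ℝ} {a b M r : ℝ}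
    (hg : ∀ x ∈ Icc a b, HasDerivWithinAt g (g' x) (Icc a b) x)
    (hM : ∀ x ∈ Icc a b, |g' x| ≤ M) (hga : g a = 0) (hgb : g b = 0) (hr : r ∈ Icc a b) :
    |g r| ≤ M * min (r - a) (b - r) := by
  have hM0 : 0 ≤ M := (abs_nonneg _).trans (hM r hr)
  have hab : a ≤ b := hr.1.trans hr.2
  have mvt := fun x (hx : x ∈ Icc a b) =>
    (convex_Icc a b).norm_image_sub_le_of_norm_hasDerivWithin_le hg hM hx hr
  have h1 := mvt a (left_mem_Icc.2 hab)
  have h2 := mvt b (right_mem_Icc.2 hab)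
  simp only [Real.norm_eq_abs, hga, hgb, sub_zero, abs_of_nonneg (sub_nonneg.2 hr.1),
    abs_sub_comm r b, abs_of_nonneg (sub_nonneg.2 hr.2)] at h1 h2
  rw [mul_min_of_nonneg _ _ hM0]
  exact le_min h1 h2

lemma continuousWithinAt_of_abs_le_mul_abs_sub {f : ℝ → ℝ} {s : Set ℝ} {x₀ C : ℝ}
    (hx₀ : x₀ ∈ s) (h : ∀ x ∈ s, |f x| ≤ C * |x - x₀|) : ContinuousWithinAt f s x₀ := by
  have h0 : f x₀ = 0 := abs_nonpos_iff.1 (by simpa using h x₀ hx₀)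
  have hC : Tendsto (fun x => C * |x - x₀|) (𝓝[s] x₀) (𝓝 0) := by
    have : Continuous fun x => C * |x - x₀| := by fun_prop
    simpa using (this.tendsto x₀).mono_left nhdsWithin_le_nhds
  rw [ContinuousWithinAt, h0]
  exact squeeze_zero_norm' (eventually_nhdsWithin_of_forall h) hC

/-- For the extremal function `sin (k log (r / a))` of the inequality, `logCot a k r = r g' / g`;
it solves the Riccati equation `r c' = -(k² + c²)`. -/
noncomputable def logCot (a k r : ℝ) : ℝ := k * cot (k * log (r / a))

lemma hasDerivAt_logCot {a k r : ℝ} (ha : a ≠ 0) (hr : r ≠ 0) (hs : sin (k * log (r / a)) ≠ 0) :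
    HasDerivAt (logCot a k) (-(k ^ 2 + logCot a k r ^ 2) / r) r := by
  have hlog : HasDerivAt (fun s => k * log (s / a)) (k / r) r := by
    refine ((((hasDerivAt_id' r).div_const a).log (div_ne_zero hr ha)).const_mul k).congr_deriv ?_
    field_simp
  refine (((Real.hasDerivAt_cot hs).comp r hlog).const_mul k).congr_deriv ?_
  simp only [logCot]
  field_simp

lemma mul_log_div_mem_Ioo_zero_pi {a b r : ℝ} (ha : 0 < a) (hr : r ∈ Ioo a b) :
    π / log (b / a) * log (r / a) ∈ Ioo 0 π := by
  have hL : 0 < log (b / a) := log_pos ((one_lt_div ha).2 (hr.1.trans hr.2))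
  refine ⟨mul_pos (div_pos pi_pos hL) (log_pos ((one_lt_div ha).2 hr.1)), ?_⟩
  rw [div_mul_eq_mul_div, div_lt_iff₀ hL]
  exact mul_lt_mul_of_pos_left
    (log_lt_log (div_pos (ha.trans hr.1) ha) (div_lt_div_of_pos_right hr.2 ha)) pi_pos

lemma abs_logCot_mul_min_sub_le {a b r : ℝ} (ha : 0 < a) (hr : r ∈ Ioo a b) :
    |logCot a (π / log (b / a)) r| * min (r - a) (b - r) ≤ b := by
  have hr0 : 0 < r := ha.trans hr.1
  have hb : 0 < b := hr0.trans hr.2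
  set k := π / log (b / a)
  have hL : 0 < log (b / a) := log_pos ((one_lt_div ha).2 (hr.1.trans hr.2))
  have hk : 0 < k := div_pos pi_pos hL
  have hθ := mul_log_div_mem_Ioo_zero_pi ha hr
  have hπ : π - k * log (r / a) = k * log (b / r) := by
    have hsplit : log (b / a) = log (b / r) + log (r / a) := by
      rw [← log_mul (by positivity) (by positivity)]
      congr 1
      field_simp
    have hkL : k * log (b / a) = π := div_mul_cancel₀ π hL.ne'
    rw [← hkL, hsplit]
    ring
  have hlow : r - a ≤ b / k * (k * log (r / a)) := by
    have hlog := one_sub_inv_le_log_of_pos (div_pos hr0 ha)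
    rw [inv_div] at hlog
    calc r - a = r * (1 - a / r) := by field_simp
      _ ≤ b * log (r / a) :=
        mul_le_mul hr.2.le hlog (by rw [sub_nonneg, div_le_one hr0]; exact hr.1.le) hb.le
      _ = b / k * (k * log (r / a)) := by field_simp
  have hhigh : b - r ≤ b / k * (π - k * log (r / a)) := by
    have hlog := one_sub_inv_le_log_of_pos (div_pos hb hr0)
    rw [inv_div] at hlog
    calc b - r = b * (1 - r / b) := by field_simp
      _ ≤ b * log (b / r) := mul_le_mul_of_nonneg_left hlog hb.le
      _ = b / k * (π - k * log (r / a)) := by rw [hπ]; field_simp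
  calc |logCot a k r| * min (r - a) (b - r)
      ≤ k * |cot (k * log (r / a))| * (b / k * min (k * log (r / a)) (π - k * log (r / a))) := by
        rw [logCot, abs_mul, abs_of_pos hk]
        refine mul_le_mul_of_nonneg_left ?_ (by positivity)
        rw [mul_min_of_nonneg _ _ (by positivity)]
        exact min_le_min hlow hhigh
    _ = b * (|cot (k * log (r / a))| * min (k * log (r / a)) (π - k * log (r / a))) := by
        field_simp
    _ ≤ b := mul_le_of_le_one_right hb.le (Real.abs_cot_mul_min_le_one hθ.1 hθ.2)

lemma abs_logCot_mul_sq_le {a b r y M : ℝ} (ha : 0 < a) (hr : r ∈ Icc a b)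
    (hy : |y| ≤ M * min (r - a) (b - r)) :
    |logCot a (π / log (b / a)) r * y ^ 2| ≤ b * M ^ 2 * min (r - a) (b - r) := by
  set m := min (r - a) (b - r)
  have hm0 : 0 ≤ m := le_min (sub_nonneg.2 hr.1) (sub_nonneg.2 hr.2)
  rcases hm0.eq_or_lt with hm | hm
  · have : y = 0 := abs_nonpos_iff.1 (by rw [← hm, mul_zero] at hy; exact hy)
    simp [this, ← hm]
  have hr' : r ∈ Ioo a b := ⟨by linarith [min_le_left (r - a) (b - r)],
    by linarith [min_le_right (r - a) (b - r)]⟩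
  have hy2 : |y| ^ 2 ≤ (M * m) ^ 2 := pow_le_pow_left₀ (abs_nonneg y) hy 2
  calc |logCot a (π / log (b / a)) r * y ^ 2|
      = |logCot a (π / log (b / a)) r| * |y| ^ 2 := by rw [abs_mul, abs_pow]
    _ ≤ |logCot a (π / log (b / a)) r| * (M * m) ^ 2 :=
        mul_le_mul_of_nonneg_left hy2 (abs_nonneg _)
    _ = (|logCot a (π / log (b / a)) r| * m) * (M ^ 2 * m) := by ring
    _ ≤ b * (M ^ 2 * m) :=
        mul_le_mul_of_nonneg_right (abs_logCot_mul_min_sub_le ha hr') (by positivity)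
    _ = b * M ^ 2 * m := by ring

lemma picone_le {r k c y z : ℝ} (hr : 0 < r) :
    -(k ^ 2 + c ^ 2) / r * y ^ 2 + c * (2 * y * z) ≤ r * z ^ 2 - k ^ 2 * (y ^ 2 / r) := by
  have hsq : r * z ^ 2 - k ^ 2 * (y ^ 2 / r) - (-(k ^ 2 + c ^ 2) / r * y ^ 2 + c * (2 * y * z))
      = (r * z - c * y) ^ 2 / r := by
    field_simp
    ring
  have : 0 ≤ (r * z - c * y) ^ 2 / r := by positivity
  linarith

lemma continuousOn_logCot_mul_sq {a b M : ℝ} {g : ℝ → ℝ} (ha : 0 < a)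
    (hgc : ContinuousOn g (Icc a b)) (hgM : ∀ r ∈ Icc a b, |g r| ≤ M * min (r - a) (b - r)) :
    ContinuousOn (fun r => logCot a (π / log (b / a)) r * g r ^ 2) (Icc a b) := by
  have hbound := fun r (hr : r ∈ Icc a b) => abs_logCot_mul_sq_le ha hr (hgM r hr)
  intro r hr
  have hC : 0 ≤ b * M ^ 2 := by have := ha.trans_le (hr.1.trans hr.2); positivity
  rcases eq_endpoints_or_mem_Ioo_of_mem_Icc hr with hra | hrb | hr'
  · rw [hra] at hr ⊢
    refine continuousWithinAt_of_abs_le_mul_abs_sub (C := b * M ^ 2) hr fun x hx => ?_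
    rw [abs_of_nonneg (sub_nonneg.2 hx.1)]
    exact (hbound x hx).trans (mul_le_mul_of_nonneg_left (min_le_left _ _) hC)
  · rw [hrb] at hr ⊢
    refine continuousWithinAt_of_abs_le_mul_abs_sub (C := b * M ^ 2) hr fun x hx => ?_
    rw [abs_sub_comm, abs_of_nonneg (sub_nonneg.2 hx.2)]
    exact (hbound x hx).trans (mul_le_mul_of_nonneg_left (min_le_right _ _) hC)
  · have hθ := mul_log_div_mem_Ioo_zero_pi ha hr'
    have hc := (hasDerivAt_logCot ha.ne' (ha.trans hr'.1).ne'
      (sin_pos_of_pos_of_lt_pi hθ.1 hθ.2).ne').continuousAt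
    exact (hc.mul ((hgc.continuousAt (Icc_mem_nhds hr'.1 hr'.2)).pow 2)).continuousWithinAt

theorem wirtinger_log_inequality {a b : ℝ} (ha : 0 < a) (hab : a < b) {g : ℝ → ℝ}
    (hg : ContDiffOn ℝ 1 g (Icc a b)) (hga : g a = 0) (hgb : g b = 0) :
    (π / log (b / a)) ^ 2 * ∫ r in a..b, g r ^ 2 / r
      ≤ ∫ r in a..b, r * derivWithin g (Icc a b) r ^ 2 := by
  set G := derivWithin g (Icc a b)
  set k := π / log (b / a)
  set F := fun r => logCot a k r * g r ^ 2
  have hgc : ContinuousOn g (Icc a b) := hg.continuousOn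
  have hGc : ContinuousOn G (Icc a b) :=
    hg.continuousOn_derivWithin (uniqueDiffOn_Icc hab) le_rfl
  have hderiv : ∀ r ∈ Icc a b, HasDerivWithinAt g (G r) (Icc a b) r := fun r hr =>
    ((hg.differentiableOn one_ne_zero) r hr).hasDerivWithinAt
  obtain ⟨M, hM⟩ := isCompact_Icc.exists_bound_of_continuousOn hGc
  have hgM := fun r (hr : r ∈ Icc a b) =>
    abs_le_mul_min_sub_of_hasDerivWithinAt hderiv hM hga hgb hr
  have hF : ∀ r ∈ Ioo a b, HasDerivAt F
      (-(k ^ 2 + logCot a k r ^ 2) / r * g r ^ 2 + logCot a k r * (2 * g r * G r)) r := by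
    intro r hr
    have hr0 : 0 < r := ha.trans hr.1
    have hθ := mul_log_div_mem_Ioo_zero_pi ha hr
    have hg' : HasDerivAt g (G r) r :=
      (hderiv r (Ioo_subset_Icc_self hr)).hasDerivAt (Icc_mem_nhds hr.1 hr.2)
    refine ((hasDerivAt_logCot ha.ne' hr0.ne' (sin_pos_of_pos_of_lt_pi hθ.1 hθ.2).ne').mul
      (hg'.fun_pow 2)).congr_deriv ?_
    ring
  have hFcont : ContinuousOn F (Icc a b) := continuousOn_logCot_mul_sq ha hgc hgM
  have hc1 : ContinuousOn (fun r => r * G r ^ 2) (Icc a b) := continuousOn_id.mul (hGc.pow 2)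
  have hc2 : ContinuousOn (fun r => g r ^ 2 / r) (Icc a b) :=
    (hgc.pow 2).div continuousOn_id fun r hr => (ha.trans_le hr.1).ne'
  have hmain := intervalIntegral.sub_le_integral_of_hasDeriv_right_of_le hab.le hFcont
    (fun r hr => (hF r hr).hasDerivWithinAt)
    (hc1.integrableOn_Icc.sub (hc2.integrableOn_Icc.const_mul (k ^ 2)))
    fun r hr => picone_le (ha.trans hr.1)
  simp only [F, hga, hgb, Pi.sub_apply] at hmain
  rw [intervalIntegral.integral_sub (hc1.intervalIntegrable_of_Icc hab.le)
    ((hc2.intervalIntegrable_of_Icc hab.le).const_mul _),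
    intervalIntegral.integral_const_mul] at hmain
  linarith

lemma integral_comp_derivWithin_Icc {E : Type*} [NormedAddCommGroup E] [NormedSpace ℝ E]
    {a b : ℝ} (hab : a ≤ b) (Φ : ℝ → ℝ → E) (g : ℝ → ℝ) :
    ∫ r in a..b, Φ r (derivWithin g (Icc a b) r) = ∫ r in a..b, Φ r (deriv g r) := by
  rw [intervalIntegral.integral_of_le hab, intervalIntegral.integral_of_le hab,
    integral_Ioc_eq_integral_Ioo, integral_Ioc_eq_integral_Ioo]
  exact setIntegral_congr_fun measurableSet_Ioo fun r hr => by
    rw [derivWithin_of_mem_nhds (Icc_mem_nhds hr.1 hr.2)]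

theorem stmt_8_general
    (ri ro : ℝ) (hri : 0 < ri) (hio : ri < ro)
    (N : ℝ)
    (g : ℝ → ℝ) (hg : ContDiffOn ℝ 1 g (Set.Icc ri ro))
    (hgi : g ri = 0) (hgo : g ro = 0) :
    ∫ r in ri..ro, (r / (N ^ 2 + r ^ 2)) * (deriv g r) ^ 2
      ≥ (Real.pi / Real.log (ri / ro)) ^ 2 / (N ^ 2 + ro ^ 2)
          * ∫ r in ri..ro, (g r) ^ 2 / r := by
  set G := derivWithin g (Icc ri ro)
  have hGc : ContinuousOn G (Icc ri ro) :=
    hg.continuousOn_derivWithin (uniqueDiffOn_Icc hio) le_rfl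
  have hD : ∀ r ∈ Icc ri ro, 0 < N ^ 2 + r ^ 2 := fun r hr => by
    have := hri.trans_le hr.1; positivity
  rw [ge_iff_le, ← inv_div ro ri, log_inv, div_neg, neg_sq]
  calc (π / log (ro / ri)) ^ 2 / (N ^ 2 + ro ^ 2) * ∫ r in ri..ro, g r ^ 2 / r
      = (N ^ 2 + ro ^ 2)⁻¹ * ((π / log (ro / ri)) ^ 2 * ∫ r in ri..ro, g r ^ 2 / r) := by ring
    _ ≤ (N ^ 2 + ro ^ 2)⁻¹ * ∫ r in ri..ro, r * G r ^ 2 :=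
        mul_le_mul_of_nonneg_left (wirtinger_log_inequality hri hio hg hgi hgo) (by positivity)
    _ = ∫ r in ri..ro, r / (N ^ 2 + ro ^ 2) * G r ^ 2 := by
        rw [← intervalIntegral.integral_const_mul]
        congr 1 with r
        ring
    _ ≤ ∫ r in ri..ro, r / (N ^ 2 + r ^ 2) * G r ^ 2 := by
        refine intervalIntegral.integral_mono_on hio.le
          ((continuousOn_id.div_const _).mul (hGc.pow 2) |>.intervalIntegrable_of_Icc hio.le)
          ((continuousOn_id.div (continuousOn_const.add (continuousOn_id.pow 2))
            fun r hr => (hD r hr).ne').mul (hGc.pow 2) |>.intervalIntegrable_of_Icc hio.le)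
          fun r hr => ?_
        have hr0 := hri.trans_le hr.1
        gcongr
        exact hr.2
    _ = ∫ r in ri..ro, r / (N ^ 2 + r ^ 2) * deriv g r ^ 2 :=
        integral_comp_derivWithin_Icc hio.le (fun r y => r / (N ^ 2 + r ^ 2) * y ^ 2) g

/-- Poincaré-type inequality on the annulus `[ri, ro]` with weight
`r / (N² + r²)` and `η = ri / ro`. -/
theorem stmt_8
    (ri ro : ℝ) (hri : 0 < ri) (hio : ri < ro)
    (N : ℝ) (hN : 0 ≤ N)
    (g : ℝ → ℝ) (hg : ContDiffOn ℝ 1 g (Set.Icc ri ro))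
    (hgi : g ri = 0) (hgo : g ro = 0) :
    ∫ r in ri..ro, (r / (N ^ 2 + r ^ 2)) * (deriv g r) ^ 2
      ≥ (Real.pi / Real.log (ri / ro)) ^ 2 / (N ^ 2 + ro ^ 2)
          * ∫ r in ri..ro, (g r) ^ 2 / r :=
  stmt_8_general ri ro hri hio N g hg hgi hgo
end

section
/- Define g : [r_i, r_o] → ℝ by g(r) = sin( π·ln(r_i/r)/ln η ). Then ∫_{r_i}^{r_o} r·g'(r)² dr = −π²/(2·ln η) and ∫_{r_i}^{r_o} g(r)²/r dr = −(ln η)/2; in particular, equality holds for this g in the weighted Wirtinger-type inequality ∫_{r_i}^{r_o} r·g'(r)² dr ≥ (π/ln η)²·∫_{r_i}^{r_o} g(r)²/r dr. -/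
/-!
The substitution `θ = k log(c/r)` has `dθ = -k dr / r`, so integrals of the form `∫ f(θ) dr / r`
become plain integrals in `θ`. For `g = sin ∘ θ` with `k = π / ln η` and `c = rᵢ`, the angle `θ`
runs over `[0, π]` as `r` runs over `[rᵢ, rₒ]`; moreover `r g'(r)² = k² cos² θ / r`, so both
weighted integrals reduce to `∫₀^π sin² = ∫₀^π cos² = π/2`.
-/

open Real MeasureTheory

theorem hasDerivAt_log_const_div {c r : ℝ} (hc : c ≠ 0) (hr : r ≠ 0) :
    HasDerivAt (fun x => log (c / x)) (-r⁻¹) r := by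
  have hcr : HasDerivAt (fun x => c / x) (-c / r ^ 2) r := by
    simpa [div_eq_mul_inv, neg_div] using (hasDerivAt_inv hr).const_mul c
  convert hcr.log (div_ne_zero hc hr) using 1
  field_simp

theorem deriv_sin_mul_log_const_div (k : ℝ) {c r : ℝ} (hc : c ≠ 0) (hr : r ≠ 0) :
    deriv (fun x => sin (k * log (c / x))) r = -(k * cos (k * log (c / r)) / r) := by
  rw [(((hasDerivAt_log_const_div hc hr).const_mul k).sin).deriv]
  ring

theorem integral_comp_mul_log_const_div_div {a b c k : ℝ} (ha : 0 < a) (hb : 0 < b) (hc : c ≠ 0)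
    (hk : k ≠ 0) {f : ℝ → ℝ} (hf : Continuous f) :
    ∫ r in a..b, f (k * log (c / r)) / r
      = -k⁻¹ * ∫ θ in k * log (c / a)..k * log (c / b), f θ := by
  have hpos : ∀ r ∈ Set.uIcc a b, 0 < r := fun r hr => (lt_min ha hb).trans_le hr.1
  have hsubst := intervalIntegral.integral_comp_mul_deriv (g := f)
    (fun r hr => (hasDerivAt_log_const_div hc (hpos r hr).ne').const_mul k)
    (continuousOn_const.mul (continuousOn_inv₀.mono fun r hr => (hpos r hr).ne').neg) hf
  rw [← hsubst, ← intervalIntegral.integral_const_mul]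
  refine intervalIntegral.integral_congr fun r hr => ?_
  have := (hpos r hr).ne'
  simp only [Function.comp_apply]
  field_simp

/-- For `g(r) = sin(π ln(ri/r)/ln η)` with `η = ri/ro`, the two integrals in
the weighted Wirtinger-type inequality evaluate to `-π²/(2 ln η)` and
`-(ln η)/2` respectively; in particular equality holds for this `g`. -/
theorem stmt_9
    (ri ro : ℝ) (hri : 0 < ri) (hio : ri < ro)
    (g : ℝ → ℝ)
    (hg : ∀ r, g r = Real.sin (Real.pi * Real.log (ri / r) / Real.log (ri / ro))) :
    (∫ r in ri..ro, r * (deriv g r) ^ 2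
        = -Real.pi ^ 2 / (2 * Real.log (ri / ro))) ∧
    (∫ r in ri..ro, (g r) ^ 2 / r = -Real.log (ri / ro) / 2) ∧
    (∫ r in ri..ro, r * (deriv g r) ^ 2
        = (Real.pi / Real.log (ri / ro)) ^ 2 * ∫ r in ri..ro, (g r) ^ 2 / r) := by
  have hro : 0 < ro := hri.trans hio
  set L := log (ri / ro)
  have hL : L ≠ 0 := (log_neg (div_pos hri hro) ((div_lt_one hro).2 hio)).ne
  have hk : π / L ≠ 0 := div_ne_zero pi_ne_zero hL
  have hθ_ri : π / L * log (ri / ri) = 0 := by simp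
  have hθ_ro : π / L * log (ri / ro) = π := div_mul_cancel₀ π hL
  have hg' : g = fun r => sin (π / L * log (ri / r)) :=
    funext fun r => by rw [hg, mul_div_right_comm]
  have hsin : ∫ r in ri..ro, g r ^ 2 / r = -L / 2 := by
    simp only [hg']
    rw [integral_comp_mul_log_const_div_div (f := fun θ => sin θ ^ 2) hri hro hri.ne' hk
      (by fun_prop), hθ_ri, hθ_ro, integral_sin_sq, sin_zero, sin_pi]
    field_simp
    ring
  have hcos : ∫ r in ri..ro, cos (π / L * log (ri / r)) ^ 2 / r = -L / 2 := by
    rw [integral_comp_mul_log_const_div_div (f := fun θ => cos θ ^ 2) hri hro hri.ne' hk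
      (by fun_prop), hθ_ri, hθ_ro, integral_cos_sq, sin_zero, sin_pi]
    field_simp
    ring
  have hweighted : ∫ r in ri..ro, r * deriv g r ^ 2
      = (π / L) ^ 2 * ∫ r in ri..ro, cos (π / L * log (ri / r)) ^ 2 / r := by
    rw [← intervalIntegral.integral_const_mul]
    refine intervalIntegral.integral_congr fun r hr => ?_
    have hr0 : r ≠ 0 := ((lt_min hri hro).trans_le hr.1).ne'
    simp only [hg', deriv_sin_mul_log_const_div _ hri.ne' hr0]
    field_simp
  refine ⟨?_, hsin, ?_⟩
  · rw [hweighted, hcos]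
    field_simp
  · rw [hweighted, hcos, hsin]
end

section
/- Let N > 0 be real and set h = (π/ln η)²/(N² + r_i²) + 1/N². Let W : [r_i, r_o] → ℝ be continuous with W(r) > h for all r ∈ [r_i, r_o], and define g : [r_i, r_o] → ℝ by g(r) = sin( π·ln(r_i/r)/ln η ). Then ∫_{r_i}^{r_o} (r/(N² + r²))·g'(r)² dr − ∫_{r_i}^{r_o} W(r)·g(r)²/r dr < −(1/N²)·∫_{r_i}^{r_o} g(r)²/r dr. (Equivalently, the Rayleigh quotient R of the trial function ψ = g/r satisfies R(ψ) < −1/N², the key inequality giving the hurdle constant h of the instability theorem for annular flows.) -/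
open Real MeasureTheory Set

/-!
Write `g = sin ∘ θ` with `θ r = π log (rᵢ / r) / log η`, which maps `[rᵢ, rₒ]` increasingly onto
`[0, π]`. The substitution `s = θ r` turns `dr / r` into `(log (rₒ / rᵢ) / π) ds`, so
`∫ sin² θ / r` and `∫ cos² θ / r` are both `log (rₒ / rᵢ) / 2`. Since
`g' r = -(π / (log η * r)) cos (θ r)` and `r ≥ rᵢ`, the first integral is at most
`(π / log η)² / (N² + rᵢ²) * ∫ cos² θ / r`, which is that constant times `∫ g² / r`. As `W > h` and
`g > 0` inside the annulus, the second integral exceeds `h * ∫ g² / r`; subtracting leaves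
`h - (π / log η)² / (N² + rᵢ²) = 1 / N²`.
-/

noncomputable def logPhase (a b r : ℝ) : ℝ := π * log (a / r) / log (a / b)

section LogPhase

variable {a b : ℝ}

theorem hasDerivAt_logPhase (ha : a ≠ 0) {r : ℝ} (hr : r ≠ 0) :
    HasDerivAt (logPhase a b) (-(π / (log (a / b) * r))) r := by
  have hdiv : HasDerivAt (fun x : ℝ => a / x) (a * -(r ^ 2)⁻¹) r := by
    simpa only [div_eq_mul_inv] using (hasDerivAt_inv hr).const_mul a
  have hlog := ((hasDerivAt_log (div_ne_zero ha hr)).comp r hdiv).const_mul π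
  refine (hlog.div_const (log (a / b))).congr_deriv ?_
  field_simp

theorem continuousOn_logPhase (ha : 0 < a) : ContinuousOn (logPhase a b) (Icc a b) :=
  fun _ hr => (hasDerivAt_logPhase ha.ne' (ha.trans_le hr.1).ne').continuousAt.continuousWithinAt

theorem logPhase_left (ha : a ≠ 0) : logPhase a b a = 0 := by
  simp [logPhase, div_self ha]

theorem logPhase_right (hab : log (a / b) ≠ 0) : logPhase a b b = π := by
  simp only [logPhase]
  field_simp

theorem log_div_neg (ha : 0 < a) (hab : a < b) : log (a / b) < 0 :=
  log_neg (div_pos ha (ha.trans hab)) ((div_lt_one (ha.trans hab)).mpr hab)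

theorem logPhase_mem_Ioo (ha : 0 < a) {r : ℝ} (hr : r ∈ Ioo a b) :
    logPhase a b r ∈ Ioo 0 π := by
  have hr0 : 0 < r := ha.trans hr.1
  have hlog_neg : log (a / r) < 0 := log_div_neg ha hr.1
  have hlog_gt : log (a / b) < log (a / r) :=
    log_lt_log (div_pos ha (hr0.trans hr.2)) (div_lt_div_of_pos_left ha hr0 hr.2)
  have hL : log (a / b) < 0 := hlog_gt.trans hlog_neg
  constructor
  · exact div_pos_of_neg_of_neg (mul_neg_of_pos_of_neg pi_pos hlog_neg) hL
  · rw [logPhase, div_lt_iff_of_neg hL]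
    exact mul_lt_mul_of_pos_left hlog_gt pi_pos

theorem integral_comp_logPhase_div (ha : 0 < a) (hab : a < b) {f : ℝ → ℝ} (hf : Continuous f) :
    ∫ r in a..b, f (logPhase a b r) / r = log (b / a) / π * ∫ s in 0..π, f s := by
  have hL := log_div_neg ha hab
  have hderiv : ∀ r ∈ uIcc a b,
      HasDerivAt (logPhase a b) (-(π / (log (a / b) * r))) r := fun r hr =>
    hasDerivAt_logPhase ha.ne' (ha.trans_le (uIcc_of_le hab.le ▸ hr).1).ne'
  have hcont : ContinuousOn (fun r => -(π / (log (a / b) * r))) (uIcc a b) := by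
    refine (continuousOn_const.div (continuousOn_const.mul continuousOn_id) ?_).neg
    intro r hr
    exact mul_ne_zero hL.ne (ha.trans_le (uIcc_of_le hab.le ▸ hr).1).ne'
  have hsubst := intervalIntegral.integral_comp_mul_deriv hderiv hcont hf
  rw [logPhase_left ha.ne', logPhase_right hL.ne] at hsubst
  rw [← hsubst, ← intervalIntegral.integral_const_mul]
  refine intervalIntegral.integral_congr fun r hr => ?_
  have hr0 : r ≠ 0 := (ha.trans_le (uIcc_of_le hab.le ▸ hr).1).ne'
  rw [← inv_div a b, log_inv]
  simp only [Function.comp]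
  field_simp [hL.ne]

theorem integral_sin_sq_logPhase_div (ha : 0 < a) (hab : a < b) :
    ∫ r in a..b, sin (logPhase a b r) ^ 2 / r = log (b / a) / 2 := by
  rw [integral_comp_logPhase_div ha hab (f := fun s => sin s ^ 2) (by fun_prop), integral_sin_sq]
  field_simp
  simp

theorem integral_cos_sq_logPhase_div (ha : 0 < a) (hab : a < b) :
    ∫ r in a..b, cos (logPhase a b r) ^ 2 / r = log (b / a) / 2 := by
  rw [integral_comp_logPhase_div ha hab (f := fun s => cos s ^ 2) (by fun_prop), integral_cos_sq]
  field_simp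
  simp

theorem integral_div_mul_deriv_sin_logPhase_sq_le (ha : 0 < a) (hab : a < b) {c : ℝ}
    (hc : 0 ≤ c) :
    ∫ r in a..b, r / (c + r ^ 2) * deriv (fun x => sin (logPhase a b x)) r ^ 2
      ≤ (π / log (a / b)) ^ 2 / (c + a ^ 2) * ∫ r in a..b, cos (logPhase a b r) ^ 2 / r := by
  have hL := (log_div_neg ha hab).ne
  have hpos : ∀ r ∈ uIcc a b, 0 < r := fun r hr => ha.trans_le (uIcc_of_le hab.le ▸ hr).1
  have hθ := continuousOn_logPhase (b := b) ha
  rw [← uIcc_of_le hab.le] at hθ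
  have hintegrand : EqOn (fun r => r / (c + r ^ 2) * deriv (fun x => sin (logPhase a b x)) r ^ 2)
      (fun r => (π / log (a / b)) ^ 2 * cos (logPhase a b r) ^ 2 / (r * (c + r ^ 2)))
      (uIcc a b) := by
    intro r hr
    have hr0 := hpos r hr
    simp only
    rw [(hasDerivAt_logPhase ha.ne' hr0.ne').sin.deriv]
    field_simp
  rw [intervalIntegral.integral_congr hintegrand, ← intervalIntegral.integral_const_mul]
  refine intervalIntegral.integral_mono_on hab.le ?_ ?_ fun r hr => ?_
  · refine ContinuousOn.intervalIntegrable ?_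
    exact (continuousOn_const.mul ((continuous_cos.comp_continuousOn hθ).pow 2)).div
      (by fun_prop) fun r hr => by have := hpos r hr; positivity
  · refine ContinuousOn.intervalIntegrable ?_
    exact continuousOn_const.mul (((continuous_cos.comp_continuousOn hθ).pow 2).div
      continuousOn_id fun r hr => (hpos r hr).ne')
  · have hr0 : 0 < r := ha.trans_le hr.1
    rw [mul_div_assoc', div_mul_eq_mul_div, div_div, mul_comm (c + a ^ 2)]
    gcongr
    exact hr.1

theorem mul_integral_lt_integral_mul {W w : ℝ → ℝ} {c : ℝ} (hab : a < b)
    (hWc : ContinuousOn W (Icc a b)) (hwc : ContinuousOn w (Icc a b))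
    (hW : ∀ x ∈ Icc a b, c < W x) (hw : ∀ x ∈ Icc a b, 0 ≤ w x) (hpos : ∃ x ∈ Icc a b, 0 < w x) :
    c * ∫ x in a..b, w x < ∫ x in a..b, W x * w x := by
  rw [← intervalIntegral.integral_const_mul]
  obtain ⟨x, hx, hwx⟩ := hpos
  refine intervalIntegral.integral_lt_integral_of_continuousOn_of_le_of_exists_lt hab
    (continuousOn_const.mul hwc) (hWc.mul hwc) (fun y hy => ?_) ⟨x, hx, ?_⟩
  · have hy' := Ioc_subset_Icc_self hy
    exact mul_le_mul_of_nonneg_right (hW y hy').le (hw y hy')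
  · exact mul_lt_mul_of_pos_right (hW x hx) hwx

end LogPhase

theorem stmt_10_general
    (ri ro : ℝ) (hri : 0 < ri) (hio : ri < ro)
    (N : ℝ)
    (h : ℝ)
    (hh : h = (Real.pi / Real.log (ri / ro)) ^ 2 / (N ^ 2 + ri ^ 2) + 1 / N ^ 2)
    (W : ℝ → ℝ) (hWc : ContinuousOn W (Set.Icc ri ro))
    (hW : ∀ r ∈ Set.Icc ri ro, h < W r)
    (g : ℝ → ℝ)
    (hg : ∀ r, g r = Real.sin (Real.pi * Real.log (ri / r) / Real.log (ri / ro))) :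
    (∫ r in ri..ro, (r / (N ^ 2 + r ^ 2)) * (deriv g r) ^ 2)
        - (∫ r in ri..ro, W r * (g r) ^ 2 / r)
      < -(1 / N ^ 2) * ∫ r in ri..ro, (g r) ^ 2 / r := by
  obtain rfl : g = fun r => sin (logPhase ri ro r) := funext hg
  have hpos : ∀ r ∈ Icc ri ro, 0 < r := fun r hr => hri.trans_le hr.1
  have hkinetic := integral_div_mul_deriv_sin_logPhase_sq_le hri hio (sq_nonneg N)
  have hpotential : h * ∫ r in ri..ro, sin (logPhase ri ro r) ^ 2 / r
      < ∫ r in ri..ro, W r * (sin (logPhase ri ro r) ^ 2 / r) := by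
    obtain ⟨x, hx⟩ := exists_between hio
    refine mul_integral_lt_integral_mul hio hWc ?_ hW (fun r hr => by have := hpos r hr; positivity)
      ⟨x, Ioo_subset_Icc_self hx, ?_⟩
    · exact ((continuous_sin.comp_continuousOn (continuousOn_logPhase hri)).pow 2).div
        continuousOn_id fun r hr => (hpos r hr).ne'
    · have hsin := sin_pos_of_mem_Ioo (logPhase_mem_Ioo hri hx)
      have := hri.trans hx.1
      positivity
  rw [integral_cos_sq_logPhase_div hri hio] at hkinetic
  rw [integral_sin_sq_logPhase_div hri hio, hh] at hpotential
  simp only [mul_div_assoc]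
  rw [integral_sin_sq_logPhase_div hri hio]
  linarith

/-- Key trial-function inequality behind the hurdle theorem for annular
flows: if `W > h = (π/ln η)²/(N² + ri²) + 1/N²` on `[ri, ro]`, then the
Rayleigh quotient of the trial function `ψ = g/r`, with
`g(r) = sin(π ln(ri/r)/ln η)`, is below `-1/N²`. -/
theorem stmt_10
    (ri ro : ℝ) (hri : 0 < ri) (hio : ri < ro)
    (N : ℝ) (hN : 0 < N)
    (h : ℝ)
    (hh : h = (Real.pi / Real.log (ri / ro)) ^ 2 / (N ^ 2 + ri ^ 2) + 1 / N ^ 2)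
    (W : ℝ → ℝ) (hWc : ContinuousOn W (Set.Icc ri ro))
    (hW : ∀ r ∈ Set.Icc ri ro, h < W r)
    (g : ℝ → ℝ)
    (hg : ∀ r, g r = Real.sin (Real.pi * Real.log (ri / r) / Real.log (ri / ro))) :
    (∫ r in ri..ro, (r / (N ^ 2 + r ^ 2)) * (deriv g r) ^ 2)
        - (∫ r in ri..ro, W r * (g r) ^ 2 / r)
      < -(1 / N ^ 2) * ∫ r in ri..ro, (g r) ^ 2 / r :=
  stmt_10_general ri ro hri hio N h hh W hWc hW g hg
end

section
/- Let N > 0 and p ≥ 2 be real numbers, and set ρ_N = ((3N² + 1)²/2)·ln((N² + 1)/N²) − 3(6N² + 1)/4, ρ_p = 8/((p + 2)(p + 4)(p + 6)), and C = (ρ_N + 1/(6N²))/ρ_p. Let W : [0, 1] → ℝ be continuous with W(r) > C·r^p for all r ∈ (0, 1). Then ∫₀¹ (r/(N² + r²))·(1 − 3r²)² dr − ∫₀¹ W(r)·r·(1 − r²)² dr < −1/(6N²). (This is the key trial-function inequality, with ψ(r) = 1 − r² so that (rψ)' = 1 − 3r² and ∫₀¹ r·ψ² dr = 1/6, giving the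 power-law hurdle C·r^p of the instability theorem for pipe flows.) -/
/-!
With the trial function `ψ(r) = 1 - r²` both integrals are explicit. The first one equals `ρ_N`
(substitute `u = N² + r²`), and `∫₀¹ r^p · r (1 - r²)² dr = ρ_p`, so the defining choice of `C`
gives `∫₀¹ C r^p · r (1 - r²)² dr = ρ_N + 1/(6N²)`. Since `W(r) > C r^p` and `r (1 - r²)² > 0` on
`(0, 1)`, the second integral strictly exceeds this value.
-/

open Real MeasureTheory Set

theorem integral_div_add_sq_mul_one_sub_three_mul_sq_sq {a : ℝ} (ha : 0 < a) :
    ∫ r in (0:ℝ)..1, r / (a + r ^ 2) * (1 - 3 * r ^ 2) ^ 2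
      = (3 * a + 1) ^ 2 / 2 * log ((a + 1) / a) - 3 * (6 * a + 1) / 4 := by
  have hderiv : ∀ x ∈ uIcc (0:ℝ) 1, HasDerivAt
      (fun r ↦ 9 / 4 * (r ^ 2 + a) ^ 2 - (9 * a + 3) * (r ^ 2 + a)
        + (3 * a + 1) ^ 2 / 2 * log (r ^ 2 + a))
      (x / (a + x ^ 2) * (1 - 3 * x ^ 2) ^ 2) x := by
    intro x _
    have hu : HasDerivAt (fun r : ℝ ↦ r ^ 2 + a) (2 * x) x := by
      simpa using (hasDerivAt_pow 2 x).add_const a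
    refine ((((hu.pow 2).const_mul (9 / 4)).sub (hu.const_mul (9 * a + 3))).add
      ((hu.log (by positivity)).const_mul ((3 * a + 1) ^ 2 / 2))).congr_deriv ?_
    field_simp
    ring
  have hcont : Continuous fun r : ℝ ↦ r / (a + r ^ 2) * (1 - 3 * r ^ 2) ^ 2 :=
    (continuous_id.div (by fun_prop) fun r ↦ by positivity).mul (by fun_prop)
  rw [intervalIntegral.integral_eq_sub_of_hasDerivAt hderiv (hcont.intervalIntegrable 0 1),
    log_div (by positivity) ha.ne']
  simp only [one_pow, zero_pow two_ne_zero, zero_add, add_comm (1:ℝ) a]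
  ring

theorem integral_rpow_mul_self_mul_one_sub_sq_sq {p : ℝ} (hp : -2 < p) :
    ∫ r in (0:ℝ)..1, r ^ p * r * (1 - r ^ 2) ^ 2 = 8 / ((p + 2) * (p + 4) * (p + 6)) := by
  have hexpand : EqOn (fun r : ℝ ↦ r ^ p * r * (1 - r ^ 2) ^ 2)
      (fun r ↦ r ^ (p + 1) - 2 * r ^ (p + 3) + r ^ (p + 5)) (uIoo 0 1) := by
    intro r hr
    have hr0 : r ≠ 0 := (uIoo_of_le (zero_le_one' ℝ) ▸ hr).1.ne'
    simp only [show p + 3 = p + 1 + 1 + 1 by ring, show p + 5 = p + 1 + 1 + 1 + 1 + 1 by ring,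
      rpow_add_one hr0]
    ring
  have hint : ∀ q : ℝ, -1 < q → IntervalIntegrable (fun r : ℝ ↦ r ^ q) volume 0 1 :=
    fun q hq ↦ intervalIntegral.intervalIntegrable_rpow' hq
  have h1 := hint (p + 1) (by linarith)
  have h3 := (hint (p + 3) (by linarith)).const_mul 2
  have h5 := hint (p + 5) (by linarith)
  rw [intervalIntegral.integral_congr_uIoo hexpand, intervalIntegral.integral_add (h1.sub h3) h5,
    intervalIntegral.integral_sub h1 h3, intervalIntegral.integral_const_mul,
    integral_rpow (Or.inl (by linarith)), integral_rpow (Or.inl (by linarith)),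
    integral_rpow (Or.inl (by linarith))]
  have hp2 : p + 2 ≠ 0 := by linarith
  have hp4 : p + 4 ≠ 0 := by linarith
  have hp6 : p + 6 ≠ 0 := by linarith
  rw [one_rpow, one_rpow, one_rpow, zero_rpow (by linarith), zero_rpow (by linarith),
    zero_rpow (by linarith), show p + 1 + 1 = p + 2 by ring, show p + 3 + 1 = p + 4 by ring,
    show p + 5 + 1 = p + 6 by ring]
  field_simp
  ring

theorem intervalIntegral_lt_of_continuousOn_of_lt_on_Ioo {f g : ℝ → ℝ} {a b : ℝ} (hab : a < b)
    (hf : ContinuousOn f (Icc a b)) (hg : ContinuousOn g (Icc a b))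
    (hlt : ∀ x ∈ Ioo a b, f x < g x) :
    ∫ x in a..b, f x < ∫ x in a..b, g x := by
  have hfi := hf.intervalIntegrable_of_Icc (μ := volume) hab.le
  have hgi := hg.intervalIntegrable_of_Icc (μ := volume) hab.le
  rw [← sub_pos, ← intervalIntegral.integral_sub hgi hfi]
  exact intervalIntegral.intervalIntegral_pos_of_pos_on (hgi.sub hfi)
    (fun x hx ↦ sub_pos.mpr (hlt x hx)) hab

/-- Key trial-function inequality behind the power-law hurdle theorem for
pipe flows, with trial function `ψ(r) = 1 - r²` (so `(rψ)' = 1 - 3r²` and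
`∫₀¹ r ψ² dr = 1/6`): if `W(r) > C r^p` on `(0,1)`, then the Rayleigh-quotient
expression is below `-1/(6N²)`. -/
theorem stmt_11
    (N p : ℝ) (hN : 0 < N) (hp : 2 ≤ p)
    (ρN ρp C : ℝ)
    (hρN : ρN = (3 * N ^ 2 + 1) ^ 2 / 2 * Real.log ((N ^ 2 + 1) / N ^ 2)
        - 3 * (6 * N ^ 2 + 1) / 4)
    (hρp : ρp = 8 / ((p + 2) * (p + 4) * (p + 6)))
    (hC : C = (ρN + 1 / (6 * N ^ 2)) / ρp)
    (W : ℝ → ℝ) (hWc : ContinuousOn W (Set.Icc 0 1))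
    (hW : ∀ r ∈ Set.Ioo (0 : ℝ) 1, C * r ^ p < W r) :
    (∫ r in (0:ℝ)..1, (r / (N ^ 2 + r ^ 2)) * (1 - 3 * r ^ 2) ^ 2)
        - (∫ r in (0:ℝ)..1, W r * r * (1 - r ^ 2) ^ 2)
      < -(1 / (6 * N ^ 2)) := by
  have hρp_pos : 0 < ρp := by
    rw [hρp]
    exact div_pos (by norm_num) (mul_pos (mul_pos (by linarith) (by linarith)) (by linarith))
  have hfirst := integral_div_add_sq_mul_one_sub_three_mul_sq_sq (pow_pos hN 2)
  have hweight : ∫ r in (0:ℝ)..1, C * (r ^ p * r * (1 - r ^ 2) ^ 2) = ρN + 1 / (6 * N ^ 2) := by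
    rw [intervalIntegral.integral_const_mul,
      integral_rpow_mul_self_mul_one_sub_sq_sq (by linarith), ← hρp, hC]
    field_simp
  have hlt : ∫ r in (0:ℝ)..1, C * (r ^ p * r * (1 - r ^ 2) ^ 2)
      < ∫ r in (0:ℝ)..1, W r * r * (1 - r ^ 2) ^ 2 := by
    refine intervalIntegral_lt_of_continuousOn_of_lt_on_Ioo zero_lt_one ?_ (by fun_prop) ?_
    · exact continuousOn_const.mul
        (((continuousOn_id.rpow_const fun _ _ ↦ Or.inr (by linarith)).mul continuousOn_id).mul
          (by fun_prop))
    · intro r hr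
      have hψ : 0 < r * (1 - r ^ 2) ^ 2 := by
        have : 0 < 1 - r ^ 2 := by nlinarith [hr.1, hr.2]
        exact mul_pos hr.1 (pow_pos this 2)
      have := mul_lt_mul_of_pos_right (hW r hr) hψ
      linarith
  linarith
end

section
/- The improper integral satisfies ∫₀^∞ [ r·(1 − 3r²)²/(1 + r²)⁶ + r/(1 + r²)⁴ − 72·r³/( (1 + r²)⁶·(2r² + 5) ) ] dr < 0. (For the Schlichting jet U(r) = (1 + r²)^{−2} one has (r·U(r))' = (1 − 3r²)/(1 + r²)³, so this is the large-N instability criterion ∫₀^∞ { r·((rU)')² + ((rU')'/(U − 4/9))·(rU)² + r·U² } dr < 0 evaluated with trial function ψ = U, establishing instability of the Schlichting jet.) -/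
/-!
With `u = 1 + r²` every term of the integrand has an elementary primitive, and the three
integrals are `1/10`, `1/6` and `(320/81) log(5/2) - 449/135`. The whole integral is
therefore `97/27 - (320/81) log(5/2) ≈ -0.027`, and its sign follows from
`log(5/2) > 21/23`, i.e. `e²¹ < (5/2)²³`.
-/

open Real MeasureTheory Filter Set Topology

lemma hasDerivAt_inv_one_add_sq_pow (n : ℕ) (x : ℝ) :
    HasDerivAt (fun x : ℝ => ((1 + x ^ 2) ^ n)⁻¹)
      (-(2 * n * x) / (1 + x ^ 2) ^ (n + 1)) x := by
  have hu : HasDerivAt (fun x : ℝ => 1 + x ^ 2) (2 * x) x := by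
    simpa using (hasDerivAt_pow 2 x).const_add 1
  have hpos : 0 < 1 + x ^ 2 := by positivity
  refine ((hu.pow n).inv (pow_ne_zero _ hpos.ne')).congr_deriv ?_
  rcases n with _ | n
  · simp
  · simp only [Pi.pow_apply]
    field_simp
    push_cast
    ring

lemma tendsto_inv_one_add_sq_pow_atTop {n : ℕ} (hn : n ≠ 0) :
    Tendsto (fun x : ℝ => ((1 + x ^ 2) ^ n)⁻¹) atTop (𝓝 0) :=
  ((tendsto_pow_atTop hn).comp
    (tendsto_atTop_add_const_left _ 1 (tendsto_pow_atTop two_ne_zero))).inv_tendsto_atTop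

lemma tendsto_log_one_add_sq_sub_log_atTop {a b : ℝ} (ha : 0 < a) (hb : 0 < b) :
    Tendsto (fun x : ℝ => log (1 + x ^ 2) - log (a * x ^ 2 + b)) atTop (𝓝 (-log a)) := by
  have hden : Tendsto (fun x : ℝ => a * x ^ 2 + b) atTop atTop :=
    tendsto_atTop_add_const_right _ b ((tendsto_pow_atTop two_ne_zero).const_mul_atTop ha)
  have hratio : Tendsto (fun x : ℝ => (1 + x ^ 2) / (a * x ^ 2 + b)) atTop (𝓝 a⁻¹) := by
    have h := (tendsto_const_nhds (x := a⁻¹)).add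
      ((tendsto_const_nhds (x := 1 - b / a)).div_atTop hden)
    rw [add_zero] at h
    refine h.congr fun x => ?_
    have : 0 < a * x ^ 2 + b := by positivity
    field_simp
    ring
  rw [← log_inv]
  refine ((continuousAt_log (inv_ne_zero ha.ne')).tendsto.comp hratio).congr fun x => ?_
  exact log_div (by positivity) (by positivity)

lemma log_five_div_two_gt : 21 / 23 < log (5 / 2) := by
  have hexp : exp 21 < (5 / 2 : ℝ) ^ 23 :=
    calc exp 21 = exp 1 ^ 21 := by rw [← exp_nat_mul]; norm_num
      _ < 2.7182818286 ^ 21 := by gcongr; exact exp_one_lt_d9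
      _ < (5 / 2) ^ 23 := by norm_num
  have h := (lt_log_iff_exp_lt (by positivity)).2 hexp
  rw [log_pow] at h
  push_cast at h
  linarith

lemma integrableOn_Ioi_zero_and_integral_eq_of_hasDerivAt {f F : ℝ → ℝ} {L : ℝ}
    (hF : ∀ x, HasDerivAt F (f x) x) (hf : ∀ x > 0, 0 ≤ f x) (hL : Tendsto F atTop (𝓝 L)) :
    IntegrableOn f (Ioi 0) ∧ ∫ x in Ioi 0, f x = L - F 0 :=
  ⟨integrableOn_Ioi_deriv_of_nonneg' (fun x _ => hF x) hf hL,
    integral_Ioi_of_hasDerivAt_of_nonneg' (fun x _ => hF x) hf hL⟩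

namespace Schlichting

noncomputable def F₁ (x : ℝ) : ℝ :=
  -8 / 5 * ((1 + x ^ 2) ^ 5)⁻¹ + 3 * ((1 + x ^ 2) ^ 4)⁻¹ - 3 / 2 * ((1 + x ^ 2) ^ 3)⁻¹

noncomputable def F₂ (x : ℝ) : ℝ := -1 / 6 * ((1 + x ^ 2) ^ 3)⁻¹

/- With `u = 1 + x²` the third integrand is `36 (u - 1) / (u⁶ (2u + 3)) du`;
`F₃` is its partial-fraction primitive. -/
noncomputable def F₃ (x : ℝ) : ℝ :=
  12 / 5 * ((1 + x ^ 2) ^ 5)⁻¹ - 5 * ((1 + x ^ 2) ^ 4)⁻¹ + 40 / 9 * ((1 + x ^ 2) ^ 3)⁻¹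
    - 40 / 9 * ((1 + x ^ 2) ^ 2)⁻¹ + 160 / 27 * ((1 + x ^ 2) ^ 1)⁻¹
    + 320 / 81 * (log (1 + x ^ 2) - log (2 * x ^ 2 + 5))

lemma hasDerivAt_F₁ (x : ℝ) :
    HasDerivAt F₁ (x * (1 - 3 * x ^ 2) ^ 2 / (1 + x ^ 2) ^ 6) x := by
  refine ((((hasDerivAt_inv_one_add_sq_pow 5 x).const_mul _).add
    ((hasDerivAt_inv_one_add_sq_pow 4 x).const_mul _)).sub
    ((hasDerivAt_inv_one_add_sq_pow 3 x).const_mul _)).congr_deriv ?_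
  field_simp
  ring

lemma hasDerivAt_F₂ (x : ℝ) : HasDerivAt F₂ (x / (1 + x ^ 2) ^ 4) x := by
  refine ((hasDerivAt_inv_one_add_sq_pow 3 x).const_mul _).congr_deriv ?_
  field_simp
  ring

lemma hasDerivAt_F₃ (x : ℝ) :
    HasDerivAt F₃ (72 * x ^ 3 / ((1 + x ^ 2) ^ 6 * (2 * x ^ 2 + 5))) x := by
  have hu : HasDerivAt (fun x : ℝ => 1 + x ^ 2) (2 * x) x := by
    simpa using (hasDerivAt_pow 2 x).const_add 1
  have hv : HasDerivAt (fun x : ℝ => 2 * x ^ 2 + 5) (2 * (2 * x)) x := by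
    simpa using ((hasDerivAt_pow 2 x).const_mul 2).add_const 5
  have hu₀ : 1 + x ^ 2 ≠ 0 := by positivity
  have hv₀ : 2 * x ^ 2 + 5 ≠ 0 := by positivity
  refine ((((((hasDerivAt_inv_one_add_sq_pow 5 x).const_mul _).sub
    ((hasDerivAt_inv_one_add_sq_pow 4 x).const_mul _)).add
    ((hasDerivAt_inv_one_add_sq_pow 3 x).const_mul _)).sub
    ((hasDerivAt_inv_one_add_sq_pow 2 x).const_mul _)).add
    ((hasDerivAt_inv_one_add_sq_pow 1 x).const_mul _)).add
    (((hu.log hu₀).sub (hv.log hv₀)).const_mul _) |>.congr_deriv ?_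
  field_simp
  ring

lemma tendsto_F₁_atTop : Tendsto F₁ atTop (𝓝 0) := by
  unfold F₁
  simpa using (((tendsto_inv_one_add_sq_pow_atTop (by norm_num : 5 ≠ 0)).const_mul (-8 / 5)).add
    ((tendsto_inv_one_add_sq_pow_atTop (by norm_num : 4 ≠ 0)).const_mul 3)).sub
    ((tendsto_inv_one_add_sq_pow_atTop (by norm_num : 3 ≠ 0)).const_mul (3 / 2))

lemma tendsto_F₂_atTop : Tendsto F₂ atTop (𝓝 0) := by
  unfold F₂
  simpa using (tendsto_inv_one_add_sq_pow_atTop (by norm_num : 3 ≠ 0)).const_mul (-1 / 6)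

lemma tendsto_F₃_atTop : Tendsto F₃ atTop (𝓝 (-(320 / 81 * log 2))) := by
  unfold F₃
  simpa using
    (((((((tendsto_inv_one_add_sq_pow_atTop (by norm_num : 5 ≠ 0)).const_mul (12 / 5)).sub
    ((tendsto_inv_one_add_sq_pow_atTop (by norm_num : 4 ≠ 0)).const_mul 5)).add
    ((tendsto_inv_one_add_sq_pow_atTop (by norm_num : 3 ≠ 0)).const_mul (40 / 9))).sub
    ((tendsto_inv_one_add_sq_pow_atTop (by norm_num : 2 ≠ 0)).const_mul (40 / 9))).add
    ((tendsto_inv_one_add_sq_pow_atTop one_ne_zero).const_mul (160 / 27))).add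
    ((tendsto_log_one_add_sq_sub_log_atTop (by norm_num : (0 : ℝ) < 2)
      (by norm_num : (0 : ℝ) < 5)).const_mul (320 / 81)))

end Schlichting

/-- Large-`N` instability criterion for the Schlichting jet
`U(r) = (1 + r²)^(-2)`, evaluated with the trial function `ψ = U` (so that
`(rU)' = (1 - 3r²)/(1 + r²)³`): the integral
`∫₀^∞ { r ((rU)')² + ((rU')'/(U - 4/9)) (rU)² + r U² } dr` is negative,
establishing instability of the Schlichting jet. -/
theorem stmt_19 :
    (∫ r in Set.Ioi (0 : ℝ),
        (r * (1 - 3 * r ^ 2) ^ 2 / (1 + r ^ 2) ^ 6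
          + r / (1 + r ^ 2) ^ 4
          - 72 * r ^ 3 / ((1 + r ^ 2) ^ 6 * (2 * r ^ 2 + 5)))) < 0 := by
  obtain ⟨i₁, e₁⟩ := integrableOn_Ioi_zero_and_integral_eq_of_hasDerivAt
    Schlichting.hasDerivAt_F₁ (fun x hx => by positivity) Schlichting.tendsto_F₁_atTop
  obtain ⟨i₂, e₂⟩ := integrableOn_Ioi_zero_and_integral_eq_of_hasDerivAt
    Schlichting.hasDerivAt_F₂ (fun x hx => by positivity) Schlichting.tendsto_F₂_atTop
  obtain ⟨i₃, e₃⟩ := integrableOn_Ioi_zero_and_integral_eq_of_hasDerivAt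
    Schlichting.hasDerivAt_F₃ (fun x hx => by positivity) Schlichting.tendsto_F₃_atTop
  rw [integral_sub (i₁.fun_add i₂) i₃, integral_add i₁ i₂, e₁, e₂, e₃]
  have hlog : log (5 / 2) = log 5 - log 2 := log_div (by norm_num) (by norm_num)
  norm_num [Schlichting.F₁, Schlichting.F₂, Schlichting.F₃]
  linarith [log_five_div_two_gt]
end
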